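/- arXiv:1609.03492 — 7 statements merged into one kernel-verified Lean document; each statement's English description precedes it below -/
import Mathlib

section
/- An abelian subgroup H of the additive group structure on pairs acting on V = GF(q)^{2n}, namely the group G = ⟨-I⟩ × B where B = { [[I,0],[Q,I]] : Q symmetric n×n over GF(q) }, has exactly q^n orbits on V = GF(q)^{2n} (acting by right multiplication). -/
/-!
Write `v = (x, y)`. Then `v * (ε • g_Q) = ε • (x + y Q, y)`. If `y = 0` the orbit of `v` is
`{(±x, 0)}`; if `y ≠ 0` then `y Q` runs over all of `GF(q)^n` as `Q` runs over the symmetric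
matrices, so the orbit is `{(z, ±y)}` for arbitrary `z`. Fixing one representative of each pair
`{a, -a}`, the orbits are therefore in bijection with the representatives of `{x, -x}` together
with the negatives of the representatives of `{y, -y}`, `y ≠ 0`. As `a ≠ -a` for `a ≠ 0` in odd
characteristic, these two families partition `GF(q)^n`, which therefore indexes the orbits.
-/

open Matrix

section SignRepresentative

variable {M : Type*} [AddGroup M]

-- Choosing from the set `{a, -a}`, not from `a`, is what makes `signRep (-a) = signRep a`.
noncomputable def signRep (a : M) : M :=
  Classical.epsilon (· ∈ ({a, -a} : Set M))

theorem signRep_neg (a : M) : signRep (-a) = signRep a := by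
  rw [signRep, signRep, neg_neg, Set.pair_comm]

theorem signRep_eq_or (a : M) : signRep a = a ∨ signRep a = -a :=
  Classical.epsilon_spec (p := (· ∈ ({a, -a} : Set M))) ⟨a, Or.inl rfl⟩

theorem signRep_eq_signRep_iff {a b : M} : signRep a = signRep b ↔ a = b ∨ a = -b := by
  constructor
  · intro h
    rcases signRep_eq_or a with ha | ha <;> rcases signRep_eq_or b with hb | hb <;>
      [left; right; right; left] <;> (rw [ha, hb] at h) <;> simpa [neg_eq_iff_eq_neg] using h
  · rintro (rfl | rfl)
    · rfl
    · exact signRep_neg b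

theorem signRep_signRep (a : M) : signRep (signRep a) = signRep a :=
  signRep_eq_signRep_iff.mpr (signRep_eq_or a)

theorem signRep_eq_zero_iff {a : M} : signRep a = 0 ↔ a = 0 := by
  have h0 : signRep (0 : M) = 0 := by simpa using signRep_eq_or (0 : M)
  conv_lhs => rw [← h0]
  rw [signRep_eq_signRep_iff, neg_zero, or_self]

end SignRepresentative

section SignRepModule

variable {R M : Type*} [Ring R] [AddCommGroup M] [Module R M]

theorem signRep_smul {ε : R} (hε : ε = 1 ∨ ε = -1) (a : M) : signRep (ε • a) = signRep a := by
  rcases hε with rfl | rfl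
  · rw [one_smul]
  · rw [neg_one_smul, signRep_neg]

theorem exists_eq_smul_of_signRep_eq {a b : M} (h : signRep a = signRep b) :
    ∃ ε : R, (ε = 1 ∨ ε = -1) ∧ b = ε • a := by
  rcases signRep_eq_signRep_iff.mp h with rfl | rfl
  · exact ⟨1, Or.inl rfl, (one_smul R a).symm⟩
  · exact ⟨-1, Or.inr rfl, by rw [neg_one_smul, neg_neg]⟩

end SignRepModule

theorem signRep_ne_neg_signRep {F M : Type*} [Field F] [AddCommGroup M] [Module F M]
    (h2 : (2 : F) ≠ 0) (a : M) {b : M} (hb : b ≠ 0) : signRep a ≠ -signRep b := by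
  intro h
  have hab : signRep a = signRep b := by
    rw [← signRep_signRep a, h, signRep_neg, signRep_signRep]
  have h2b : (2 : F) • signRep b = 0 := by
    rw [two_smul]
    nth_rewrite 1 [← hab]
    rw [h, neg_add_cancel]
  exact hb (signRep_eq_zero_iff.mp ((smul_eq_zero.mp h2b).resolve_left h2))

theorem sum_elim_vecMul_smul_fromBlocks {ι R : Type*} [Fintype ι] [DecidableEq ι] [CommRing R]
    (ε : R) (x y : ι → R) (Q : Matrix ι ι R) :
    Sum.elim x y ᵥ* (ε • fromBlocks 1 0 Q 1) = Sum.elim (ε • (x + y ᵥ* Q)) (ε • y) := by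
  rw [vecMul_smul, vecMul_fromBlocks]
  ext (i | i) <;> simp [mul_add]

theorem Sum.elim_inj {α β γ : Type*} {x x' : α → γ} {y y' : β → γ} :
    Sum.elim x y = Sum.elim x' y' ↔ x = x' ∧ y = y' := by
  simp [funext_iff]

section SignedShear

variable {ι F : Type*} [Fintype ι] [DecidableEq ι] [Field F]

-- With `y ⬝ᵥ u = 1`, the symmetric matrix below maps `y` to `t + (y ⬝ᵥ t) • u - (y ⬝ᵥ t) • u`.
theorem exists_isSymm_vecMul_eq {y : ι → F} (hy : y ≠ 0) (t : ι → F) :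
    ∃ Q : Matrix ι ι F, Q.IsSymm ∧ y ᵥ* Q = t := by
  obtain ⟨i, hi⟩ : ∃ i, y i ≠ 0 := Function.ne_iff.mp hy
  set u : ι → F := Pi.single i (y i)⁻¹
  have hu : y ⬝ᵥ u = 1 := by rw [dotProduct_single, mul_inv_cancel₀ hi]
  refine ⟨vecMulVec u t + vecMulVec t u - (y ⬝ᵥ t) • vecMulVec u u, ?_, ?_⟩
  · simp only [IsSymm, transpose_sub, transpose_add, transpose_smul, transpose_vecMulVec]
    abel
  · simp only [vecMul_sub, vecMul_add, vecMul_smul, vecMul_vecMulVec, hu, one_smul]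
    abel

variable (ι F) in
def signedShearRel (v w : ι ⊕ ι → F) : Prop :=
  ∃ ε : F, (ε = 1 ∨ ε = -1) ∧ ∃ Q : Matrix ι ι F, Q.IsSymm ∧
    w = Matrix.vecMul v (ε • Matrix.fromBlocks 1 0 Q 1)

theorem signedShearRel_sum_elim_iff {x y x' y' : ι → F} :
    signedShearRel ι F (Sum.elim x y) (Sum.elim x' y') ↔
      ∃ ε : F, (ε = 1 ∨ ε = -1) ∧ ∃ Q : Matrix ι ι F, Q.IsSymm ∧
        x' = ε • (x + y ᵥ* Q) ∧ y' = ε • y := by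
  simp only [signedShearRel, sum_elim_vecMul_smul_fromBlocks, Sum.elim_inj]

end SignedShear

section OrbitInvariant

variable {ι F : Type*} [Fintype ι] [Field F] [DecidableEq F]

-- The minus sign in the second branch keeps its values apart from those of the first branch
-- in odd characteristic (`signRep_ne_neg_signRep`).
noncomputable def orbitInvariant (v : ι ⊕ ι → F) : ι → F :=
  if v ∘ Sum.inr = 0 then signRep (v ∘ Sum.inl) else -signRep (v ∘ Sum.inr)

theorem orbitInvariant_sum_elim (x y : ι → F) :
    orbitInvariant (Sum.elim x y) = if y = 0 then signRep x else -signRep y :=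
  rfl

theorem orbitInvariant_surjective : Function.Surjective (orbitInvariant (ι := ι) (F := F)) := by
  intro t
  rcases signRep_eq_or t with ht | ht
  · exact ⟨Sum.elim t 0, by rw [orbitInvariant_sum_elim, if_pos rfl, ht]⟩
  · by_cases ht0 : t = 0
    · exact ⟨Sum.elim t 0, by rw [orbitInvariant_sum_elim, if_pos rfl, ht, ht0, neg_zero]⟩
    · exact ⟨Sum.elim 0 t, by rw [orbitInvariant_sum_elim, if_neg ht0, ht, neg_neg]⟩

variable [DecidableEq ι]

theorem orbitInvariant_vecMul_smul_fromBlocks {ε : F} (hε : ε = 1 ∨ ε = -1)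
    (Q : Matrix ι ι F) (v : ι ⊕ ι → F) :
    orbitInvariant (v ᵥ* (ε • fromBlocks 1 0 Q 1)) = orbitInvariant v := by
  have hε0 : ε ≠ 0 := by rcases hε with rfl | rfl <;> simp
  rw [← Sum.elim_comp_inl_inr v, sum_elim_vecMul_smul_fromBlocks, orbitInvariant_sum_elim,
    orbitInvariant_sum_elim]
  by_cases hy : v ∘ Sum.inr = 0
  · simp [hy, signRep_smul hε]
  · simp [hy, hε0, signRep_smul hε]

theorem signedShearRel_of_orbitInvariant_eq (h2 : (2 : F) ≠ 0) {v w : ι ⊕ ι → F}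
    (h : orbitInvariant v = orbitInvariant w) : signedShearRel ι F v w := by
  rw [← Sum.elim_comp_inl_inr v, ← Sum.elim_comp_inl_inr w] at h ⊢
  generalize v ∘ Sum.inl = x, v ∘ Sum.inr = y, w ∘ Sum.inl = x', w ∘ Sum.inr = y' at h ⊢
  rw [orbitInvariant_sum_elim, orbitInvariant_sum_elim] at h
  rw [signedShearRel_sum_elim_iff]
  by_cases hy : y = 0 <;> by_cases hy' : y' = 0 <;>
    simp only [hy, hy', if_pos, if_neg, not_false_eq_true] at h
  · obtain ⟨ε, hε, rfl⟩ := exists_eq_smul_of_signRep_eq (R := F) h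
    exact ⟨ε, hε, 0, isSymm_zero, by simp [hy], by simp [hy, hy']⟩
  · exact absurd h (signRep_ne_neg_signRep h2 x hy')
  · exact absurd h.symm (signRep_ne_neg_signRep h2 x' hy)
  · obtain ⟨ε, hε, rfl⟩ := exists_eq_smul_of_signRep_eq (R := F) (neg_injective h)
    obtain ⟨Q, hQ, hyQ⟩ := exists_isSymm_vecMul_eq hy (ε • x' - x)
    have hεε : ε * ε = 1 := by rcases hε with rfl | rfl <;> norm_num
    exact ⟨ε, hε, Q, hQ, by rw [hyQ, add_sub_cancel, smul_smul, hεε, one_smul], rfl⟩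

theorem signedShearRel_iff_orbitInvariant_eq (h2 : (2 : F) ≠ 0) {v w : ι ⊕ ι → F} :
    signedShearRel ι F v w ↔ orbitInvariant v = orbitInvariant w := by
  refine ⟨?_, signedShearRel_of_orbitInvariant_eq h2⟩
  rintro ⟨ε, hε, Q, -, rfl⟩
  exact (orbitInvariant_vecMul_smul_fromBlocks hε Q v).symm

end OrbitInvariant

theorem Nat.card_quot_eq_of_surjective {α β : Type*} {r : α → α → Prop} {f : α → β}
    (hf : Function.Surjective f) (hr : ∀ a b, r a b ↔ f a = f b) :
    Nat.card (Quot r) = Nat.card β := by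
  obtain rfl : r = fun a b => f a = f b := funext₂ fun a b => propext (hr a b)
  exact Nat.card_congr (Setoid.quotientKerEquivOfSurjective f hf)

theorem orbit_count_G_general (q n : ℕ) (F : Type) [Field F] [Fintype F]
    (hq : Fintype.card F = q) (hodd : Odd q) :
    Nat.card (Quot (fun v w : (Fin n ⊕ Fin n) → F =>
      ∃ ε : F, (ε = 1 ∨ ε = -1) ∧ ∃ Q : Matrix (Fin n) (Fin n) F, Q.IsSymm ∧
        w = Matrix.vecMul v (ε • Matrix.fromBlocks 1 0 Q 1))) = q ^ n := by
  have hchar : ringChar F ≠ 2 := fun h => by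
    have := FiniteField.even_card_of_char_two h
    rw [hq, Nat.odd_iff.mp hodd] at this
    exact one_ne_zero this
  have h2 : (2 : F) ≠ 0 := Ring.two_ne_zero hchar
  classical
  show Nat.card (Quot (signedShearRel (Fin n) F)) = q ^ n
  rw [Nat.card_quot_eq_of_surjective orbitInvariant_surjective
    fun v w => signedShearRel_iff_orbitInvariant_eq h2, Nat.card_eq_fintype_card,
    Fintype.card_fun, Fintype.card_fin, hq]

/-- The group `G = ⟨-I⟩ × B`, where `B` consists of the block matrices
`g_Q = [[I, 0], [Q, I]]` with `Q` symmetric `n × n` over `GF(q)`, acting on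
`V = GF(q)^{2n}` by right multiplication, has exactly `q ^ n` orbits.
An orbit quotient is modelled by `Quot` of the relation identifying `v` with
`v * (ε • g_Q)` for `ε = ±1` and `Q` symmetric. -/
theorem orbit_count_G (q n : ℕ) (hn : 1 ≤ n) (F : Type) [Field F] [Fintype F]
    (hq : Fintype.card F = q) (hodd : Odd q) :
    Nat.card (Quot (fun v w : (Fin n ⊕ Fin n) → F =>
      ∃ ε : F, (ε = 1 ∨ ε = -1) ∧ ∃ Q : Matrix (Fin n) (Fin n) F, Q.IsSymm ∧
        w = Matrix.vecMul v (ε • Matrix.fromBlocks 1 0 Q 1))) = q ^ n :=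
  orbit_count_G_general q n F hq hodd
end

section
/- For v = (x,y) ∈ GF(q)^n × GF(q)^n with y ≠ 0, the number of n×n symmetric matrices Q over GF(q) with yQ = 0 is q^{n(n-1)/2}. -/
/-!
Symmetric matrices are functions on `Sym2 (Fin n)`, so there are `q ^ (n + 1).choose 2` of them.
The additive map `Q ↦ y Q` onto row vectors is surjective: choosing `a` with `y ⬝ a = 1`, the
symmetric matrix `a vᵀ + v aᵀ - (y ⬝ v) a aᵀ` is sent to `v`. Its kernel, the set being counted,
therefore has `q ^ ((n + 1).choose 2 - n) = q ^ n.choose 2` elements.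
-/

open Matrix

theorem AddMonoidHom.natCard_ker_mul_natCard_of_surjective {G H : Type*} [AddGroup G]
    [AddGroup H] {f : G →+ H} (hf : Function.Surjective f) :
    Nat.card f.ker * Nat.card H = Nat.card G := by
  rw [← f.ker.card_mul_index, AddSubgroup.index_ker, f.range_eq_top.2 hf, AddSubgroup.card_top]

namespace Matrix

variable {ι R : Type*}

theorem exists_dotProduct_eq_one [Fintype ι] {K : Type*} [Field K] {y : ι → K} (hy : y ≠ 0) :
    ∃ a, y ⬝ᵥ a = 1 := by
  classical
  obtain ⟨i, hi⟩ : ∃ i, y i ≠ 0 := Function.ne_iff.1 hy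
  exact ⟨Pi.single i (y i)⁻¹, by simp [hi]⟩

def symmetricAddSubgroup (ι R : Type*) [AddGroup R] : AddSubgroup (Matrix ι ι R) where
  carrier := {Q | Q.IsSymm}
  add_mem' := IsSymm.add
  zero_mem' := isSymm_zero
  neg_mem' := IsSymm.neg

def symmetricAddSubgroupEquivSym2 [AddGroup R] : symmetricAddSubgroup ι R ≃ (Sym2 ι → R) :=
  (Equiv.subtypeEquivRight fun _ => IsSymm.ext_iff.trans forall_comm).trans Sym2.lift

theorem natCard_symmetricAddSubgroup [Finite ι] [AddGroup R] :
    Nat.card (symmetricAddSubgroup ι R) = Nat.card R ^ (Nat.card ι + 1).choose 2 := by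
  rw [Nat.card_congr symmetricAddSubgroupEquivSym2, Nat.card_fun, Sym2.natCard]

variable [Fintype ι] [CommRing R]

def symmetricVecMul (y : ι → R) : symmetricAddSubgroup ι R →+ (ι → R) where
  toFun Q := y ᵥ* Q
  map_zero' := vecMul_zero y
  map_add' Q Q' := vecMul_add Q.1 Q'.1 y

theorem symmetricVecMul_surjective {y : ι → R} (hy : ∃ a, y ⬝ᵥ a = 1) :
    Function.Surjective (symmetricVecMul y) := by
  obtain ⟨a, ha⟩ := hy
  intro v
  refine ⟨⟨vecMulVec a v + vecMulVec v a - (y ⬝ᵥ v) • vecMulVec a a, ?_⟩, ?_⟩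
  · simp [symmetricAddSubgroup, IsSymm, transpose_sub, add_comm]
  · change y ᵥ* _ = v
    simp [vecMul_sub, vecMul_add, vecMul_smul, vecMul_vecMulVec, ha]

end Matrix

theorem symmetric_annihilator_count_general (q n : ℕ) (F : Type) [Field F] [Fintype F]
    (hq : Fintype.card F = q) (y : Fin n → F) (hy : y ≠ 0) :
    Nat.card {Q : Matrix (Fin n) (Fin n) F // Q.IsSymm ∧ Matrix.vecMul y Q = 0} =
      q ^ (n * (n - 1) / 2) := by
  replace hq : Nat.card F = q := Nat.card_eq_fintype_card.trans hq
  have hker : Nat.card {Q : Matrix (Fin n) (Fin n) F // Q.IsSymm ∧ y ᵥ* Q = 0} =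
      Nat.card (symmetricVecMul y).ker :=
    Nat.card_congr <| (Equiv.subtypeSubtypeEquivSubtypeInter _ _).symm.trans
      (Equiv.subtypeEquivRight fun _ => Iff.rfl)
  have hcount := AddMonoidHom.natCard_ker_mul_natCard_of_surjective
    (symmetricVecMul_surjective (exists_dotProduct_eq_one hy))
  rw [natCard_symmetricAddSubgroup, Nat.card_fun, Nat.card_fin, hq, Nat.choose_succ_succ',
    Nat.choose_one_right, pow_add, mul_comm (q ^ n)] at hcount
  rw [hker, ← Nat.choose_two_right]
  exact Nat.eq_of_mul_eq_mul_right (pow_pos (hq ▸ Nat.card_pos) n) hcount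

/-- For a nonzero row vector `y ∈ GF(q)^n`, the number of `n × n` symmetric matrices `Q`
over `GF(q)` with `y * Q = 0` is `q ^ (n * (n - 1) / 2)`. -/
theorem symmetric_annihilator_count (q n : ℕ) (hn : 1 ≤ n) (F : Type) [Field F] [Fintype F]
    (hq : Fintype.card F = q) (y : Fin n → F) (hy : y ≠ 0) :
    Nat.card {Q : Matrix (Fin n) (Fin n) F // Q.IsSymm ∧ Matrix.vecMul y Q = 0} =
      q ^ (n * (n - 1) / 2) :=
  symmetric_annihilator_count_general q n F hq y hy
end

section
/- The terms of odd rank cancel in the sum Σ_{Q ∈ S_n} ρ^{-rank Q} Δ(Q): for each symmetric Q of odd rank over GF(q) (q odd) and ν a fixed nonsquare, Δ(νQ) = -Δ(Q) and rank(νQ) = rank(Q), so the total contribution of odd-rank symmetric matrices to the sum is zero. -/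
open Matrix
open scoped Classical

/-- The canonical additive character of the finite field `F` of characteristic `p`. -/
noncomputable def psi (p : ℕ) (F : Type) [Field F] [Fintype F] [Algebra (ZMod p) F] : F → ℂ :=
  fun a => Complex.exp (2 * Real.pi * Complex.I * ((Algebra.trace (ZMod p) F a).val : ℂ) / p)

/-- `Δ(Q)`: the quadratic character of the product of the nonzero diagonal entries of a
diagonalization of the symmetric matrix `Q`, i.e. the quadratic character of the determinant
of the nonsingular part of `Q` (with `Δ(0) = 1`). -/
noncomputable def Delta (F : Type) [Field F] [Fintype F] [DecidableEq F] {n : ℕ}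
    (Q : Matrix (Fin n) (Fin n) F) : ℤ :=
  if h : ∃ M : Matrix (Fin n) (Fin n) F, ∃ d : Fin n → F,
      IsUnit M ∧ Q = Mᵀ * Matrix.diagonal d * M then
    quadraticChar F (∏ i ∈ Finset.univ.filter (fun i => h.choose_spec.choose i ≠ 0),
      h.choose_spec.choose i)
  else 1

/-!
Diagonalize `Q = Mᵀ diag(d) M`. Then `νQ = Mᵀ diag(νd) M`, so `νQ` has the same rank
`#{i | dᵢ ≠ 0}` and its product of nonzero diagonal entries is that of `Q` times `ν ^ rank Q`,
whose quadratic character is `-1` when the rank is odd. The real work is that `Δ` does not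
depend on the diagonalization: two diagonalizations are congruent, and restricting the
congruence to the nonzero entries gives a congruence between the nonsingular parts, whose
determinants therefore differ by a nonzero square. Finally `Q ↦ νQ` permutes the odd-rank
symmetric matrices and negates every summand, so the sum vanishes.
-/

namespace Matrix

theorem transpose_mul_diagonal_mul_apply {ι κ R : Type*} [Fintype κ] [DecidableEq κ]
    [CommSemiring R] (A : Matrix κ ι R) (e : κ → R) (i j : ι) :
    (Aᵀ * diagonal e * A) i j = ∑ k, A k i * e k * A k j := by
  simp only [mul_apply (M := Aᵀ * diagonal e), mul_diagonal, transpose_apply]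

variable {ι : Type*} [Fintype ι] [DecidableEq ι]

theorem rank_transpose_mul_mul_of_isUnit {K : Type*} [Field K] {M : Matrix ι ι K} (hM : IsUnit M)
    (A : Matrix ι ι K) : (Mᵀ * A * M).rank = A.rank := by
  have hdet : IsUnit M.det := (isUnit_iff_isUnit_det M).mp hM
  rw [rank_mul_eq_left_of_isUnit_det _ _ hdet,
    rank_mul_eq_right_of_isUnit_det _ _ (by rwa [det_transpose])]

theorem IsSymm.exists_eq_transpose_mul_diagonal_mul {K : Type*} [Field K] [Invertible (2 : K)]
    {Q : Matrix ι ι K} (hQ : Q.IsSymm) :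
    ∃ M : Matrix ι ι K, ∃ d : ι → K, IsUnit M ∧ Q = Mᵀ * diagonal d * M := by
  set B := toBilin (Pi.basisFun K ι) Q
  obtain ⟨v, hv⟩ := LinearMap.BilinForm.exists_orthogonal_basis
    (LinearMap.BilinForm.isSymm_iff.mp ((isSymm_toBilin_iff_isSymm (Pi.basisFun K ι)).mpr hQ))
  let w := v.reindex
    (Fintype.equivFinOfCardEq (Module.finrank_fintype_fun_eq_card K).symm).symm
  have hdiag : LinearMap.BilinForm.toMatrix w B = diagonal fun i => B (w i) (w i) := by
    ext i j
    rw [LinearMap.BilinForm.toMatrix_apply]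
    rcases eq_or_ne i j with rfl | hij
    · rw [diagonal_apply_eq]
    · rw [diagonal_apply_ne _ hij, Module.Basis.reindex_apply, Module.Basis.reindex_apply]
      exact hv fun h => hij (Equiv.injective _ h)
  refine ⟨w.toMatrix (Pi.basisFun K ι), fun i => B (w i) (w i),
    @isUnit_of_invertible _ _ _ (w.invertibleToMatrix _), ?_⟩
  rw [← hdiag, LinearMap.BilinForm.toMatrix_mul_basis_toMatrix,
    LinearMap.BilinForm.toMatrix_toBilin]

-- `DecidableEq R` makes the `Fintype` instances of the subtypes the same as in `rank_diagonal`.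
theorem diagonal_subtype_eq_of_eq_transpose_mul_diagonal_mul {R : Type*} [CommRing R]
    [NoZeroDivisors R] [DecidableEq R] {d e : ι → R} {P : Matrix ι ι R}
    (h : diagonal d = Pᵀ * diagonal e * P) :
    diagonal (fun i : {i // d i ≠ 0} => d i) =
      (P.submatrix Subtype.val Subtype.val : Matrix {i // e i ≠ 0} {i // d i ≠ 0} R)ᵀ *
        diagonal (fun i : {i // e i ≠ 0} => e i) * P.submatrix Subtype.val Subtype.val := by
  ext i j
  calc diagonal (fun i : {i // d i ≠ 0} => d i) i j = diagonal d i j :=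
        (congr_fun₂ (submatrix_diagonal_embedding d (.subtype _)) i j).symm
    _ = ∑ k, P k i * e k * P k j := by rw [h, transpose_mul_diagonal_mul_apply]
    _ = ∑ k ∈ Finset.univ.filter (e · ≠ 0), P k i * e k * P k j :=
        (Finset.sum_filter_of_ne fun k _ hk => right_ne_zero_of_mul (left_ne_zero_of_mul hk)).symm
    _ = ∑ k : {k // e k ≠ 0}, P k i * e k * P k j := Finset.sum_subtype _ (by simp) _
    _ = _ := (transpose_mul_diagonal_mul_apply (P.submatrix _ _) _ i j).symm

end Matrix

theorem ne_zero_of_not_isSquare {M₀ : Type*} [MonoidWithZero M₀] {a : M₀} (h : ¬IsSquare a) :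
    a ≠ 0 := by
  rintro rfl
  exact h IsSquare.zero

section QuadraticChar

variable {F : Type*} [Field F] [Fintype F] [DecidableEq F]

open Matrix

theorem quadraticChar_det_transpose_mul_mul {σ τ : Type*} [Fintype σ] [DecidableEq σ]
    [Fintype τ] [DecidableEq τ] (φ : σ ≃ τ) (A : Matrix τ σ F) (Y : Matrix τ τ F)
    (h : (Aᵀ * Y * A).det ≠ 0) :
    quadraticChar F (Aᵀ * Y * A).det = quadraticChar F Y.det := by
  set B := A.submatrix φ id
  have hdet : (Aᵀ * Y * A).det = B.det ^ 2 * Y.det := by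
    have hB : Aᵀ * Y * A = Bᵀ * Y.submatrix φ φ * B := by
      rw [transpose_submatrix, submatrix_mul_equiv, submatrix_mul_equiv]
      simp
    rw [hB, det_mul, det_mul, det_transpose, det_submatrix_equiv_self]
    ring
  rw [hdet] at h ⊢
  rw [map_mul, quadraticChar_sq_one' fun hB => h (by simp [hB]), one_mul]

variable {ι : Type*} [Fintype ι] [DecidableEq ι]

theorem quadraticChar_prod_ne_zero_eq_of_diagonal_eq {d e : ι → F} {P : Matrix ι ι F}
    (hP : IsUnit P) (h : diagonal d = Pᵀ * diagonal e * P) :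
    quadraticChar F (∏ i ∈ Finset.univ.filter (d · ≠ 0), d i) =
      quadraticChar F (∏ i ∈ Finset.univ.filter (e · ≠ 0), e i) := by
  have hcard : Fintype.card {i // d i ≠ 0} = Fintype.card {i // e i ≠ 0} := by
    have hrank := congr_arg rank h
    rwa [rank_transpose_mul_mul_of_isUnit hP, rank_diagonal, rank_diagonal] at hrank
  have hrestrict := diagonal_subtype_eq_of_eq_transpose_mul_diagonal_mul h
  have hd : (∏ i ∈ Finset.univ.filter (d · ≠ 0), d i) =
      (diagonal fun i : {i // d i ≠ 0} => d i).det := by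
    rw [det_diagonal, Finset.prod_subtype (p := (d · ≠ 0)) _ (by simp)]
  have he : (∏ i ∈ Finset.univ.filter (e · ≠ 0), e i) =
      (diagonal fun i : {i // e i ≠ 0} => e i).det := by
    rw [det_diagonal, Finset.prod_subtype (p := (e · ≠ 0)) _ (by simp)]
  have hd0 : (diagonal fun i : {i // d i ≠ 0} => d i).det ≠ 0 := by
    rw [det_diagonal]
    exact Finset.prod_ne_zero_iff.mpr fun i _ => i.2
  rw [hd, he, hrestrict]
  rw [hrestrict] at hd0
  exact quadraticChar_det_transpose_mul_mul (Fintype.equivOfCardEq hcard) _ _ hd0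

theorem quadraticChar_prod_ne_zero_eq_of_congr {d e : ι → F} {M N : Matrix ι ι F}
    (hM : IsUnit M) (hN : IsUnit N)
    (h : Mᵀ * diagonal d * M = Nᵀ * diagonal e * N) :
    quadraticChar F (∏ i ∈ Finset.univ.filter (d · ≠ 0), d i) =
      quadraticChar F (∏ i ∈ Finset.univ.filter (e · ≠ 0), e i) := by
  obtain ⟨u, rfl⟩ := hM
  refine quadraticChar_prod_ne_zero_eq_of_diagonal_eq (hN.mul (u⁻¹).isUnit) ?_
  calc diagonal d
        = (↑u⁻¹ : Matrix ι ι F)ᵀ * ((↑u : Matrix ι ι F)ᵀ * diagonal d * ↑u) * ↑u⁻¹ := by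
        simp only [Matrix.mul_assoc, Units.mul_inv, Matrix.mul_one]
        simp only [← Matrix.mul_assoc, ← transpose_mul, Units.mul_inv, transpose_one,
          Matrix.one_mul]
    _ = (N * ↑u⁻¹)ᵀ * diagonal e * (N * ↑u⁻¹) := by
        rw [h, transpose_mul]
        simp only [Matrix.mul_assoc]

end QuadraticChar

section Delta

variable {F : Type} [Field F] [Fintype F] [DecidableEq F]

open Matrix

theorem Delta_eq_of_eq_transpose_mul_diagonal_mul {n : ℕ} {Q M : Matrix (Fin n) (Fin n) F}
    {d : Fin n → F} (hM : IsUnit M) (hQ : Q = Mᵀ * diagonal d * M) :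
    Delta F Q = quadraticChar F (∏ i ∈ Finset.univ.filter (d · ≠ 0), d i) := by
  have hex : ∃ M : Matrix (Fin n) (Fin n) F, ∃ d : Fin n → F,
      IsUnit M ∧ Q = Mᵀ * diagonal d * M := ⟨M, d, hM, hQ⟩
  rw [Delta, dif_pos hex]
  obtain ⟨hM', hQ'⟩ := hex.choose_spec.choose_spec
  exact quadraticChar_prod_ne_zero_eq_of_congr hM' hM (hQ'.symm.trans hQ)

theorem Delta_smul_of_odd_rank {n : ℕ} {ν : F} (hν : ¬IsSquare ν)
    {Q : Matrix (Fin n) (Fin n) F} (hQ : Q.IsSymm) (hr : Odd Q.rank) :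
    Delta F (ν • Q) = -Delta F Q := by
  have : Invertible (2 : F) := invertibleOfNonzero
    (Ring.two_ne_zero fun h => hν (FiniteField.isSquare_of_char_two h ν))
  have hν0 : ν ≠ 0 := ne_zero_of_not_isSquare hν
  obtain ⟨M, d, hM, rfl⟩ := hQ.exists_eq_transpose_mul_diagonal_mul
  rw [rank_transpose_mul_mul_of_isUnit hM, rank_diagonal, Fintype.card_subtype] at hr
  have hsmul : ν • (Mᵀ * diagonal d * M) = Mᵀ * diagonal (ν • d) * M := by
    rw [diagonal_smul, Matrix.mul_smul, Matrix.smul_mul]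
  have hsupp : Finset.univ.filter (fun i => (ν • d) i ≠ 0) = Finset.univ.filter (d · ≠ 0) := by
    simp [hν0]
  rw [hsmul, Delta_eq_of_eq_transpose_mul_diagonal_mul hM rfl,
    Delta_eq_of_eq_transpose_mul_diagonal_mul hM rfl, hsupp]
  simp only [Pi.smul_apply, smul_eq_mul, Finset.prod_mul_distrib, Finset.prod_const, map_mul,
    map_pow, quadraticChar_neg_one_iff_not_isSquare.mpr hν, hr.neg_one_pow, neg_one_mul]

end Delta

theorem Finset.sum_eq_zero_of_map_eq_neg {α M : Type*} [AddCommGroup M] [IsAddTorsionFree M]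
    {s : Finset α} {f : α → M} (σ : α ≃ α) (hs : ∀ a, a ∈ s ↔ σ a ∈ s)
    (hf : ∀ a ∈ s, f (σ a) = -f a) : ∑ a ∈ s, f a = 0 := by
  have h : ∑ a ∈ s, f a = ∑ a ∈ s, -f a :=
    Finset.sum_equiv σ hs fun a ha => by rw [hf a ha, neg_neg]
  rwa [Finset.sum_neg_distrib, self_eq_neg] at h

theorem odd_rank_cancel_general (n p : ℕ) (F : Type) [Field F] [Fintype F]
    [DecidableEq F] [Algebra (ZMod p) F] (ν : F) (hν : ¬ IsSquare ν) :
    (∀ Q : Matrix (Fin n) (Fin n) F, Q.IsSymm → Odd Q.rank →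
      Delta F (ν • Q) = -(Delta F Q) ∧ (ν • Q).rank = Q.rank) ∧
    (∑ Q ∈ Finset.univ.filter (fun Q : Matrix (Fin n) (Fin n) F => Q.IsSymm ∧ Odd Q.rank),
        (∑ α : F, psi p F (α ^ 2)) ^ (-(Q.rank : ℤ)) * (Delta F Q : ℂ)) = 0 := by
  have hν0 : ν ≠ 0 := ne_zero_of_not_isSquare hν
  have hrank (Q : Matrix (Fin n) (Fin n) F) : (ν • Q).rank = Q.rank :=
    Matrix.rank_smul_of_mem_nonZeroDivisors Q (mem_nonZeroDivisors_of_ne_zero hν0)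
  have hcancel (Q : Matrix (Fin n) (Fin n) F) (hQ : Q.IsSymm) (hr : Odd Q.rank) :
      Delta F (ν • Q) = -Delta F Q ∧ (ν • Q).rank = Q.rank :=
    ⟨Delta_smul_of_odd_rank hν hQ hr, hrank Q⟩
  have : Invertible ν := invertibleOfNonzero hν0
  refine ⟨hcancel, Finset.sum_eq_zero_of_map_eq_neg (MulAction.toPerm (Units.mk0 ν hν0))
    (fun Q => ?_) (fun Q hQ => ?_)⟩
  · simp [Matrix.isSymm_smul_iff, hrank]
  · obtain ⟨hΔ, hr⟩ := hcancel Q (Finset.mem_filter.mp hQ).2.1 (Finset.mem_filter.mp hQ).2.2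
    simp [hΔ, hr]

/-- Odd-rank terms cancel in `Σ_{Q ∈ S_n} ρ^{-rank Q} Δ(Q)`: for a nonsquare `ν` and
symmetric `Q` of odd rank, `Δ(νQ) = -Δ(Q)` and `rank(νQ) = rank Q`; consequently the
total contribution of the odd-rank symmetric matrices to the sum is zero. -/
theorem odd_rank_cancel (q n p : ℕ) [Fact p.Prime] (hn : 1 ≤ n) (F : Type) [Field F] [Fintype F]
    [DecidableEq F] [Algebra (ZMod p) F] (hp : p = ringChar F) (hq : Fintype.card F = q)
    (hodd : Odd q) (ν : F) (hν : ¬ IsSquare ν) :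
    (∀ Q : Matrix (Fin n) (Fin n) F, Q.IsSymm → Odd Q.rank →
      Delta F (ν • Q) = -(Delta F Q) ∧ (ν • Q).rank = Q.rank) ∧
    (∑ Q ∈ Finset.univ.filter (fun Q : Matrix (Fin n) (Fin n) F => Q.IsSymm ∧ Odd Q.rank),
        (∑ α : F, psi p F (α ^ 2)) ^ (-(Q.rank : ℤ)) * (Delta F Q : ℂ)) = 0 :=
  odd_rank_cancel_general n p F ν hν
end

section
/- The number of skew-symmetric (alternating) n×n matrices of rank 2k over GF(q) is [n choose 2k]_q · q^{k²-k} · Π_{i=0}^{k-1}(q^{2i+1}-1), where [n choose 2k]_q is the Gaussian binomial coefficient. -/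
/-!
An alternating matrix `A` of rank `2k` is determined by its column space `W`, of dimension `2k`,
and a nondegenerate alternating form on `W`: if the columns of `M` form a basis of `W` and
`N * M = 1`, then `A = M * (N * A * Nᵀ) * Mᵀ`, and `B ↦ M * B * Mᵀ` is a bijection from the
invertible alternating `2k × 2k` matrices onto the alternating matrices with column space `W`.

An invertible alternating matrix of size `m + 2` has first row `(0, v)` with `v ≠ 0`. A congruence
fixing the first coordinate moves `v` to the first basis vector, and an alternating matrix with
first row `(0, 1, 0)` is invertible iff its lower right `m × m` block `C` is, the rest of its
second row being arbitrary. So the number `c m` of invertible alternating `m × m` matrices over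
`GF(q)` satisfies `c (m + 2) = (q ^ (m + 1) - 1) * q ^ m * c m`.
-/

open Matrix

namespace Matrix

variable {R : Type*} [CommRing R] {ι κ : Type*}

def IsAlt (A : Matrix ι ι R) : Prop := Aᵀ = -A ∧ ∀ i, A i i = 0

theorem IsAlt.apply_swap {A : Matrix ι ι R} (hA : A.IsAlt) (i j : ι) : A j i = -A i j := by
  simpa using congr_fun₂ hA.1 i j

theorem IsAlt.submatrix {A : Matrix ι ι R} (hA : A.IsAlt) (f : κ → ι) :
    (A.submatrix f f).IsAlt :=
  ⟨by rw [transpose_submatrix, hA.1]; rfl, fun i => hA.2 (f i)⟩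

theorem IsAlt.dotProduct_mulVec_self [Fintype ι] {A : Matrix ι ι R} (hA : A.IsAlt) (x : ι → R) :
    x ⬝ᵥ (A *ᵥ x) = 0 := by
  simp only [dotProduct, mulVec, Finset.mul_sum, ← Finset.sum_product']
  refine Finset.sum_involution (fun p _ => p.swap) (fun p _ => ?_) (fun p _ hp hswap => ?_)
    (by simp) (by simp)
  · rw [Prod.fst_swap, Prod.snd_swap, hA.apply_swap]; ring
  · obtain ⟨i, j⟩ := p
    obtain rfl : j = i := congr_arg Prod.fst hswap
    simp [hA.2] at hp

theorem IsAlt.mul_mul_transpose [Fintype ι] {A : Matrix ι ι R} (hA : A.IsAlt)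
    (M : Matrix κ ι R) : (M * A * Mᵀ).IsAlt := by
  refine ⟨by simp [transpose_mul, hA.1, Matrix.mul_assoc], fun i => ?_⟩
  change M i ᵥ* A ⬝ᵥ M i = 0
  rw [← dotProduct_mulVec, hA.dotProduct_mulVec_self]

def border (v : κ → R) (D : Matrix κ κ R) : Matrix (Unit ⊕ κ) (Unit ⊕ κ) R :=
  fromBlocks 0 (replicateRow Unit v) (-replicateCol Unit v) D

theorem isAlt_border_iff {v : κ → R} {D : Matrix κ κ R} : (border v D).IsAlt ↔ D.IsAlt := by
  simp [IsAlt, border, fromBlocks_transpose, fromBlocks_neg, Sum.forall]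

theorem IsAlt.border_toBlocks {B : Matrix (Unit ⊕ κ) (Unit ⊕ κ) R} (hB : B.IsAlt) :
    border (B.toBlocks₁₂ ()) B.toBlocks₂₂ = B := by
  ext (i | i) (j | j)
  · exact (hB.2 (Sum.inl ())).symm
  · rfl
  · simp [border, hB.apply_swap (Sum.inl ()), toBlocks₁₂]
  · rfl

def borderEquiv (p : Matrix (Unit ⊕ κ) (Unit ⊕ κ) R → Prop) :
    {B // B.IsAlt ∧ p B} ≃ Σ v : κ → R, {D : Matrix κ κ R // D.IsAlt ∧ p (border v D)} where
  toFun B := ⟨B.1.toBlocks₁₂ (), B.1.toBlocks₂₂,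
    (isAlt_border_iff.1 (B.2.1.border_toBlocks ▸ B.2.1)), B.2.1.border_toBlocks ▸ B.2.2⟩
  invFun x := ⟨border x.1 x.2.1, isAlt_border_iff.2 x.2.2.1, x.2.2.2⟩
  left_inv B := Subtype.ext B.2.1.border_toBlocks
  right_inv _ := rfl

theorem fromBlocks_one_mul_border_mul_transpose [Fintype κ] (Q : Matrix κ κ R) (v : κ → R)
    (D : Matrix κ κ R) :
    fromBlocks 1 0 0 Q * border v D * (fromBlocks 1 0 0 Q)ᵀ = border (Q *ᵥ v) (Q * D * Qᵀ) := by
  simp [border, fromBlocks_multiply, fromBlocks_transpose, ← replicateCol_mulVec,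
    ← vecMul_transpose, replicateRow_vecMul]

theorem border_mulVec [Fintype κ] (v : κ → R) (D : Matrix κ κ R) (x : Unit ⊕ κ → R) :
    border v D *ᵥ x = Sum.elim (fun _ => v ⬝ᵥ (x ∘ Sum.inr))
      (-x (Sum.inl ()) • v + D *ᵥ (x ∘ Sum.inr)) := by
  ext (i | i)
  · simp [border, fromBlocks_mulVec, replicateRow_mulVec_eq_const]
  · simp [border, replicateCol, mulVec, dotProduct, mul_comm]

theorem det_border_single_border_eq_zero_iff [IsDomain R] [Fintype κ] [DecidableEq κ]
    (t : κ → R) (C : Matrix κ κ R) :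
    (border (Pi.single (Sum.inl ()) 1) (border t C)).det = 0 ↔ C.det = 0 := by
  -- a kernel vector `(a, b, u)` has `b = 0`, `C *ᵥ u = 0` and `a = t ⬝ᵥ u`
  simp only [← exists_mulVec_eq_zero_iff, border_mulVec]
  constructor
  · rintro ⟨x, hx, hBx⟩
    have h₁ : x (Sum.inr (Sum.inl ())) = 0 := by simpa using congr_fun hBx (Sum.inl ())
    have hCu : C *ᵥ (x ∘ Sum.inr ∘ Sum.inr) = 0 := by
      ext i
      simpa [h₁, Function.comp_assoc] using congr_fun hBx (Sum.inr (Sum.inr i))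
    refine ⟨_, fun hu => hx ?_, hCu⟩
    have h₀ : x (Sum.inl ()) = 0 := by
      simpa [Function.comp_assoc, hu] using congr_fun hBx (Sum.inr (Sum.inl ()))
    ext (i | i | i)
    exacts [h₀, h₁, congr_fun hu i]
  · rintro ⟨u, hu, hCu⟩
    refine ⟨Sum.elim (fun _ => t ⬝ᵥ u) (Sum.elim 0 u), fun h => hu ?_, ?_⟩
    · ext i
      simpa using congr_fun h (Sum.inr (Sum.inr i))
    · ext (i | i | i) <;> simp [hCu]

def nondegAlt (ι R : Type*) [Fintype ι] [DecidableEq ι] [CommRing R] : Set (Matrix ι ι R) :=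
  {B | B.IsAlt ∧ IsUnit B.det}

theorem natCard_nondegAlt_of_isEmpty [Fintype ι] [DecidableEq ι] [IsEmpty ι] :
    Nat.card (nondegAlt ι R) = 1 :=
  Nat.card_eq_one_iff_unique.2 ⟨inferInstance, ⟨⟨0, by simp [nondegAlt, IsAlt]⟩⟩⟩

section Congruence

variable [Fintype κ] [DecidableEq κ]

theorem natCard_nondegAlt_congr [Fintype ι] [DecidableEq ι] (e : ι ≃ κ) :
    Nat.card (nondegAlt ι R) = Nat.card (nondegAlt κ R) :=
  Nat.card_congr <| (reindex e e).subtypeEquiv fun B => by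
    simp only [nondegAlt, Set.mem_ofPred_eq, reindex_apply, det_submatrix_equiv_self]
    exact and_congr_left' ⟨fun h => h.submatrix _, fun h => by simpa using h.submatrix e⟩

noncomputable def congrEquiv (Q : Matrix κ κ R) (hQ : IsUnit Q.det) :
    Matrix κ κ R ≃ Matrix κ κ R where
  toFun D := Q * D * Qᵀ
  invFun D := Q⁻¹ * D * Q⁻¹ᵀ
  left_inv D := by
    simp only [← Matrix.mul_assoc, nonsing_inv_mul _ hQ, Matrix.one_mul]
    rw [Matrix.mul_assoc, ← transpose_mul, nonsing_inv_mul _ hQ, transpose_one, Matrix.mul_one]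
  right_inv D := by
    simp only [← Matrix.mul_assoc, mul_nonsing_inv _ hQ, Matrix.one_mul]
    rw [Matrix.mul_assoc, ← transpose_mul, mul_nonsing_inv _ hQ, transpose_one, Matrix.mul_one]

theorem isAlt_congrEquiv_iff {Q : Matrix κ κ R} (hQ : IsUnit Q.det) {D : Matrix κ κ R} :
    (congrEquiv Q hQ D).IsAlt ↔ D.IsAlt :=
  ⟨fun h => (congrEquiv Q hQ).symm_apply_apply D ▸ h.mul_mul_transpose Q⁻¹,
    fun h => h.mul_mul_transpose Q⟩

theorem isUnit_det_border_congrEquiv_iff {Q : Matrix κ κ R} (hQ : IsUnit Q.det) (v : κ → R)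
    (D : Matrix κ κ R) :
    IsUnit (border (Q *ᵥ v) (congrEquiv Q hQ D)).det ↔ IsUnit (border v D).det := by
  rw [congrEquiv, Equiv.coe_fn_mk, ← fromBlocks_one_mul_border_mul_transpose, det_mul, det_mul,
    det_transpose, det_fromBlocks_zero₂₁, det_one, one_mul]
  simp [IsUnit.mul_iff, hQ]

def borderFiber (v : κ → R) : Set (Matrix κ κ R) := {D | D.IsAlt ∧ IsUnit (border v D).det}

noncomputable def borderFiberEquiv {Q : Matrix κ κ R} (hQ : IsUnit Q.det) (v : κ → R) :
    borderFiber v ≃ borderFiber (Q *ᵥ v) :=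
  (congrEquiv Q hQ).subtypeEquiv fun D =>
    and_congr (isAlt_congrEquiv_iff hQ).symm (isUnit_det_border_congrEquiv_iff hQ v D).symm

def nondegAltEquivSigmaBorderFiber : nondegAlt (Unit ⊕ κ) R ≃
    Σ v : κ → R, borderFiber v :=
  borderEquiv fun B => IsUnit B.det

theorem borderFiber_zero [Nontrivial R] : borderFiber (0 : κ → R) = ∅ := by
  refine Set.eq_empty_of_forall_notMem fun D hD => not_isUnit_zero (M₀ := R) ?_
  rw [← det_eq_zero_of_row_eq_zero (A := border 0 D) (Sum.inl ()) (fun j => ?_)]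
  · exact hD.2
  · cases j <;> simp [border]

end Congruence

section Field

variable {F : Type*} [Field F] [Fintype κ] [DecidableEq κ]

theorem exists_isUnit_det_mulVec_eq {v w : κ → F} (hv : v ≠ 0) (hw : w ≠ 0) :
    ∃ Q : Matrix κ κ F, IsUnit Q.det ∧ Q *ᵥ v = w := by
  obtain ⟨g, hg⟩ := Submodule.exists_linearEquiv_restrict_eq
    (LinearEquiv.coord F _ v hv ≪≫ₗ LinearEquiv.toSpanNonzeroSingleton F _ w hw)
  refine ⟨LinearMap.toMatrix' g, by rw [LinearMap.det_toMatrix']; exact g.isUnit_det', ?_⟩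
  rw [← Matrix.toLin'_apply, Matrix.toLin'_toMatrix']
  simpa [LinearEquiv.coord_self] using (hg ⟨v, Submodule.mem_span_singleton_self v⟩).symm

theorem isUnit_det_border_single_border_iff [Fintype ι] [DecidableEq ι] (t : ι → F)
    (C : Matrix ι ι F) :
    IsUnit (border (Pi.single (Sum.inl ()) 1) (border t C)).det ↔ IsUnit C.det := by
  simp only [isUnit_iff_ne_zero, ne_eq, det_border_single_border_eq_zero_iff]

end Field

section Count

variable {F : Type*} [Field F] [Fintype F] {ι : Type*} [Fintype ι] [DecidableEq ι]

noncomputable def borderFiberSingleEquiv :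
    borderFiber (Pi.single (Sum.inl ()) 1 : Unit ⊕ ι → F) ≃ (ι → F) × nondegAlt ι F :=
  (borderEquiv _).trans <| (Equiv.sigmaCongrRight fun t => Equiv.subtypeEquivRight fun C =>
    and_congr_right' (isUnit_det_border_single_border_iff t C)).trans (Equiv.sigmaEquivProd _ _)

theorem natCard_borderFiber {v : Unit ⊕ ι → F} (hv : v ≠ 0) :
    Nat.card (borderFiber v) = Fintype.card F ^ Fintype.card ι * Nat.card (nondegAlt ι F) := by
  obtain ⟨Q, hQ, hQv⟩ := exists_isUnit_det_mulVec_eq hv (Pi.single_ne_zero_iff.2 one_ne_zero)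
  rw [Nat.card_congr ((borderFiberEquiv hQ v).trans (hQv ▸ borderFiberSingleEquiv)),
    Nat.card_prod, Nat.card_fun, Nat.card_eq_fintype_card, Nat.card_eq_fintype_card]

theorem natCard_nondegAlt_unit_sum_unit_sum :
    Nat.card (nondegAlt (Unit ⊕ (Unit ⊕ ι)) F) =
      (Fintype.card F ^ (Fintype.card ι + 1) - 1) *
        (Fintype.card F ^ Fintype.card ι * Nat.card (nondegAlt ι F)) := by
  classical
  rw [Nat.card_congr nondegAltEquivSigmaBorderFiber, Nat.card_sigma,
    Fintype.sum_eq_add_sum_compl 0, borderFiber_zero, Nat.card_of_isEmpty, zero_add,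
    Finset.sum_congr rfl fun v hv =>
      natCard_borderFiber (Finset.mem_compl.1 hv ∘ Finset.mem_singleton.2),
    Finset.sum_const, smul_eq_mul, Finset.card_compl, Finset.card_singleton,
    Fintype.card_fun, Fintype.card_sum, Fintype.card_unit, add_comm 1]

theorem natCard_nondegAlt_fin (k : ℕ) :
    Nat.card (nondegAlt (Fin (2 * k)) F) = Fintype.card F ^ (k ^ 2 - k) *
      ∏ i ∈ Finset.range k, (Fintype.card F ^ (2 * i + 1) - 1) := by
  induction k with
  | zero => simpa using natCard_nondegAlt_of_isEmpty (ι := Fin 0) (R := F)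
  | succ k ih =>
    have e : Fin (2 * (k + 1)) ≃ Unit ⊕ (Unit ⊕ Fin (2 * k)) :=
      Fintype.equivOfCardEq (by simp; omega)
    have hexp : (k + 1) ^ 2 - (k + 1) = 2 * k + (k ^ 2 - k) := by
      have : k ≤ k ^ 2 := Nat.le_self_pow two_ne_zero k
      rw [add_sq]
      omega
    rw [natCard_nondegAlt_congr e, natCard_nondegAlt_unit_sum_unit_sum, ih, Fintype.card_fin,
      hexp, pow_add _ (2 * k) (k ^ 2 - k), Finset.prod_range_succ]
    ring

theorem natCard_nondegAlt {k : ℕ} (hι : Fintype.card ι = 2 * k) :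
    Nat.card (nondegAlt ι F) = Fintype.card F ^ (k ^ 2 - k) *
      ∏ i ∈ Finset.range k, (Fintype.card F ^ (2 * i + 1) - 1) := by
  rw [natCard_nondegAlt_congr (Fintype.equivFinOfCardEq hι), natCard_nondegAlt_fin]

end Count

open LinearMap (range)

section ColumnSpace

variable [Fintype ι] [Fintype κ] [DecidableEq κ] {M : Matrix ι κ R} {N : Matrix κ ι R}

theorem mul_mul_eq_self_of_range_le (hNM : N * M = 1) {ι' : Type*} [Fintype ι']
    {A : Matrix ι ι' R} (hA : range A.mulVecLin ≤ range M.mulVecLin) : M * N * A = A := by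
  refine ext_iff_mulVec.2 fun x => ?_
  obtain ⟨y, hy⟩ := hA ⟨x, rfl⟩
  simp only [mulVecLin_apply] at hy
  rw [← mulVec_mulVec, ← hy, mulVec_mulVec, Matrix.mul_assoc, hNM, Matrix.mul_one]

theorem IsAlt.mul_transpose_eq_self_of_range_le {A : Matrix ι ι R} (hA : A.IsAlt)
    (hNM : N * M = 1) (hr : range A.mulVecLin ≤ range M.mulVecLin) : A * (M * N)ᵀ = A := by
  rw [← transpose_transpose A, ← transpose_mul, hA.1, Matrix.mul_neg,
    mul_mul_eq_self_of_range_le hNM hr, ← hA.1, transpose_transpose]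

theorem IsAlt.mul_mul_mul_mul_transpose_eq_self {A : Matrix ι ι R} (hA : A.IsAlt)
    (hNM : N * M = 1) (hr : range A.mulVecLin ≤ range M.mulVecLin) :
    M * (N * A * Nᵀ) * Mᵀ = A := by
  conv_rhs => rw [← hA.mul_transpose_eq_self_of_range_le hNM hr,
    ← mul_mul_eq_self_of_range_le hNM hr]
  simp only [transpose_mul, Matrix.mul_assoc]

theorem range_mulVecLin_mul_mul_transpose (hNM : N * M = 1) {B : Matrix κ κ R}
    (hB : IsUnit B.det) : range (M * B * Mᵀ).mulVecLin = range M.mulVecLin := by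
  rw [Matrix.mul_assoc, mulVecLin_mul,
    LinearMap.range_comp_of_range_eq_top _ (LinearMap.range_eq_top.2 fun y => ?_)]
  obtain ⟨z, rfl⟩ := mulVec_surjective_iff_isUnit.2 ((isUnit_iff_isUnit_det B).2 hB) y
  refine ⟨Nᵀ *ᵥ z, ?_⟩
  rw [mulVecLin_apply, ← mulVec_mulVec, mulVec_mulVec (M := Mᵀ), ← transpose_mul, hNM,
    transpose_one, one_mulVec]

theorem IsAlt.isUnit_det_mul_mul_transpose {A : Matrix ι ι R} (hA : A.IsAlt) (hNM : N * M = 1)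
    (hr : range A.mulVecLin = range M.mulVecLin) : IsUnit (N * A * Nᵀ).det := by
  rw [← isUnit_iff_isUnit_det, ← mulVec_surjective_iff_isUnit]
  intro y
  obtain ⟨x, hx⟩ : M *ᵥ y ∈ range A.mulVecLin := hr ▸ ⟨y, rfl⟩
  refine ⟨Mᵀ *ᵥ x, ?_⟩
  rw [mulVecLin_apply] at hx
  rw [mulVec_mulVec, show N * A * Nᵀ * Mᵀ = N * (A * (M * N)ᵀ) by
    simp only [transpose_mul, Matrix.mul_assoc], hA.mul_transpose_eq_self_of_range_le hNM hr.le,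
    ← mulVec_mulVec, hx, mulVec_mulVec, hNM, one_mulVec]

def nondegAltEquivOfLeftInverse (hNM : N * M = 1) :
    nondegAlt κ R ≃ {A : Matrix ι ι R // A.IsAlt ∧ range A.mulVecLin = range M.mulVecLin} where
  toFun B :=
    ⟨M * B.1 * Mᵀ, B.2.1.mul_mul_transpose M, range_mulVecLin_mul_mul_transpose hNM B.2.2⟩
  invFun A :=
    ⟨N * A.1 * Nᵀ, A.2.1.mul_mul_transpose N, A.2.1.isUnit_det_mul_mul_transpose hNM A.2.2⟩
  left_inv B := Subtype.ext <| by
    simp only [← Matrix.mul_assoc, hNM, Matrix.one_mul]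
    rw [Matrix.mul_assoc, ← transpose_mul, hNM, transpose_one, Matrix.mul_one]
  right_inv A := Subtype.ext <| A.2.1.mul_mul_mul_mul_transpose_eq_self hNM A.2.2.le

end ColumnSpace

open _root_.Module (finrank finBasis)

theorem _root_.Submodule.exists_mul_eq_one_and_range_mulVecLin_eq {F ι : Type*} [Field F]
    [Fintype ι] (W : Submodule F (ι → F)) :
    ∃ (M : Matrix ι (Fin (finrank F W)) F) (N : Matrix (Fin (finrank F W)) ι F),
      N * M = 1 ∧ range M.mulVecLin = W := by
  classical
  let f := W.subtype ∘ₗ (finBasis F W).equivFun.symm.toLinearMap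
  obtain ⟨g, hg⟩ := f.exists_leftInverse_of_injective
    (LinearMap.ker_eq_bot.2 (W.injective_subtype.comp (LinearEquiv.injective _)))
  refine ⟨LinearMap.toMatrix' f, LinearMap.toMatrix' g, ?_, ?_⟩
  · rw [← LinearMap.toMatrix'_comp, hg, LinearMap.toMatrix'_id]
  · rw [← toLin'_apply', toLin'_toMatrix', LinearMap.range_comp, LinearEquiv.range,
      Submodule.map_top, Submodule.range_subtype]

def isAltRankEquiv {R ι : Type*} [CommRing R] [Fintype ι] (r : ℕ) :
    {A : Matrix ι ι R // A.IsAlt ∧ A.rank = r} ≃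
      Σ W : {W : Submodule R (ι → R) // finrank R W = r},
        {A : Matrix ι ι R // A.IsAlt ∧ range A.mulVecLin = W} where
  toFun A := ⟨⟨range A.1.mulVecLin, A.2.2⟩, A.1, A.2.1, rfl⟩
  invFun A := ⟨A.2.1, A.2.2.1, by rw [Matrix.rank, A.2.2.2, A.1.2]⟩
  left_inv _ := rfl
  right_inv := by
    rintro ⟨⟨W, hW⟩, A, hA, hAW⟩
    obtain rfl : range A.mulVecLin = W := hAW
    rfl

theorem natCard_isAlt_range_eq {F ι : Type*} [Field F] [Fintype ι]
    (W : Submodule F (ι → F)) :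
    Nat.card {A : Matrix ι ι F // A.IsAlt ∧ range A.mulVecLin = W} =
      Nat.card (nondegAlt (Fin (finrank F W)) F) := by
  obtain ⟨M, N, hNM, hM⟩ := W.exists_mul_eq_one_and_range_mulVecLin_eq
  exact Nat.card_congr ((nondegAltEquivOfLeftInverse hNM).trans
    (Equiv.subtypeEquivRight fun A => by rw [hM])).symm

theorem natCard_isAlt_rank_eq (F ι : Type*) [Field F] [Fintype F] [Fintype ι] (k : ℕ) :
    Nat.card {A : Matrix ι ι F // A.IsAlt ∧ A.rank = 2 * k} =
      Nat.card {W : Submodule F (ι → F) // finrank F W = 2 * k} *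
        (Fintype.card F ^ (k ^ 2 - k) *
          ∏ i ∈ Finset.range k, (Fintype.card F ^ (2 * i + 1) - 1)) := by
  have := Fintype.ofFinite {W : Submodule F (ι → F) // finrank F W = 2 * k}
  rw [Nat.card_congr (isAltRankEquiv _), Nat.card_sigma,
    Finset.sum_congr rfl fun W _ => (natCard_isAlt_range_eq W.1).trans
      (natCard_nondegAlt (by rw [Fintype.card_fin, W.2])),
    Finset.sum_const, Finset.card_univ, smul_eq_mul, Nat.card_eq_fintype_card]

end Matrix

theorem alternating_rank_count_general (q n k : ℕ) (F : Type)
    [Field F] [Fintype F] (hq : Fintype.card F = q) :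
    Nat.card {A : Matrix (Fin n) (Fin n) F //
        Aᵀ = -A ∧ (∀ i, A i i = 0) ∧ A.rank = 2 * k} =
      Nat.card {W : Submodule F (Fin n → F) // Module.finrank F W = 2 * k} *
        q ^ (k ^ 2 - k) * ∏ i ∈ Finset.range k, (q ^ (2 * i + 1) - 1) := by
  subst hq
  rw [mul_assoc, ← natCard_isAlt_rank_eq]
  exact Nat.card_congr (Equiv.subtypeEquivRight fun A => and_assoc.symm)

/-- The number of alternating (skew-symmetric with zero diagonal) `n × n` matrices of rank `2k`
over `GF(q)` is `[n choose 2k]_q · q^{k²-k} · Π_{i=0}^{k-1} (q^{2i+1} - 1)`, where the Gaussian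
binomial coefficient `[n choose 2k]_q` is realized as the number of `2k`-dimensional subspaces
of `GF(q)^n`. -/
theorem alternating_rank_count (q n k : ℕ) (hn : 1 ≤ n) (hk : 2 * k ≤ n) (F : Type)
    [Field F] [Fintype F] (hq : Fintype.card F = q) :
    Nat.card {A : Matrix (Fin n) (Fin n) F //
        Aᵀ = -A ∧ (∀ i, A i i = 0) ∧ A.rank = 2 * k} =
      Nat.card {W : Submodule F (Fin n → F) // Module.finrank F W = 2 * k} *
        q ^ (k ^ 2 - k) * ∏ i ∈ Finset.range k, (q ^ (2 * i + 1) - 1) :=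
  alternating_rank_count_general q n k F hq
end

section
/- The q-binomial identity: q^{n(n-1)/2} = Σ_{k=0}^{⌊n/2⌋} [n choose 2k]_q · q^{k²-k} · Π_{i=0}^{k-1}(q^{2i+1}-1). -/
/-!
Write `t(n, k) = [n, 2k]_q q^(k²-k) ∏_{i<k} (q^(2i+1) - 1)`. The q-Pascal rule
`[n+1, j+1] = [n, j] + q^(j+1) [n, j+1]` followed by the absorption identity
`[n, j+1] (q^(j+1) - 1) = [n, j] (q^(n-j) - 1)` gives
`t(n+1, k+1) = q^n t(n, k) + (q^(2k+2) t(n, k+1) - q^(2k) t(n, k))`,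
so summing over `k` telescopes to `∑ₖ t(n+1, k) = q^n ∑ₖ t(n, k)`, and induction gives
`∑ₖ t(n, k) = q^(n choose 2)`.
Over `𝔽_q`, counting linearly independent `d`-tuples in `𝔽_q^n` by the subspace they span shows
that `[n, d]_q` is the number of `d`-dimensional subspaces.
-/

open Finset Module

section GaussBinom

variable {R : Type*}

-- `[n, j]_q`, defined by the q-Pascal rule so that no division is involved.
def gaussBinom [Semiring R] (q : R) : ℕ → ℕ → R
  | _, 0 => 1
  | 0, _ + 1 => 0
  | n + 1, j + 1 => gaussBinom q n j + q ^ (j + 1) * gaussBinom q n (j + 1)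

variable [CommRing R] (q : R)

@[simp]
theorem gaussBinom_zero_right (n : ℕ) : gaussBinom q n 0 = 1 := by
  cases n <;> rfl

@[simp]
theorem gaussBinom_zero_succ (j : ℕ) : gaussBinom q 0 (j + 1) = 0 := rfl

theorem gaussBinom_succ_succ (n j : ℕ) :
    gaussBinom q (n + 1) (j + 1) = gaussBinom q n j + q ^ (j + 1) * gaussBinom q n (j + 1) :=
  rfl

theorem gaussBinom_eq_zero_of_lt {n j : ℕ} (h : n < j) : gaussBinom q n j = 0 := by
  induction n generalizing j with
  | zero =>
    cases j with
    | zero => omega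
    | succ j => rfl
  | succ n ih =>
    obtain _ | j := j
    · omega
    · rw [gaussBinom_succ_succ, ih (by omega), ih (by omega), mul_zero, add_zero]

-- For `n ≤ j` both sides vanish, the right one through `n - j = 0`.
theorem gaussBinom_succ_mul_pow_sub_one (n j : ℕ) :
    gaussBinom q n (j + 1) * (q ^ (j + 1) - 1) = gaussBinom q n j * (q ^ (n - j) - 1) := by
  induction n generalizing j with
  | zero => simp
  | succ n ih =>
    rcases j with _ | j
    · have := ih 0
      simp only [gaussBinom_succ_succ, gaussBinom_zero_right, zero_add, pow_one,
        Nat.sub_zero] at this ⊢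
      linear_combination q * this
    · rcases Nat.lt_or_ge n (j + 1) with h | h
      · rw [gaussBinom_eq_zero_of_lt q (by omega : n + 1 < j + 1 + 1),
          Nat.sub_eq_zero_of_le (by omega : n + 1 ≤ j + 1)]
        simp
      have hpow₁ : q ^ (j + 1) * q ^ (n - j) = q ^ (n + 1) := by
        rw [← pow_add]; congr 1; omega
      have hpow₂ : q ^ (j + 1 + 1) * q ^ (n - (j + 1)) = q ^ (n + 1) := by
        rw [← pow_add]; congr 1; omega
      rw [gaussBinom_succ_succ, gaussBinom_succ_succ, show n + 1 - (j + 1) = n - j by omega]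
      linear_combination q ^ (j + 1 + 1) * ih (j + 1) + ih j
        + gaussBinom q n (j + 1) * (hpow₂ - hpow₁)

theorem gaussBinom_mul_prod_pow_sub_pow (n d : ℕ) :
    gaussBinom q n d * ∏ i ∈ range d, (q ^ d - q ^ i) = ∏ i ∈ range d, (q ^ n - q ^ i) := by
  induction d with
  | zero => simp
  | succ d ih =>
    have hshift : ∏ i ∈ range (d + 1), (q ^ (d + 1) - q ^ i)
        = (q ^ (d + 1) - 1) * (q ^ d * ∏ i ∈ range d, (q ^ d - q ^ i)) := by
      rw [prod_range_succ', pow_zero, mul_comm]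
      congr 1
      simp_rw [pow_succ' q, ← mul_sub]
      rw [prod_mul_distrib, prod_const, card_range]
    rcases Nat.lt_or_ge n d with h | h
    · rw [gaussBinom_eq_zero_of_lt q (by omega), zero_mul,
        prod_eq_zero (mem_range.2 (by omega : n < d + 1)) (sub_self _)]
    have hpow : q ^ (n - d) * q ^ d = q ^ n := by rw [← pow_add]; congr 1; omega
    rw [hshift, prod_range_succ, ← ih]
    set P := ∏ i ∈ range d, (q ^ d - q ^ i)
    linear_combination q ^ d * P * gaussBinom_succ_mul_pow_sub_one q n d
      + gaussBinom q n d * P * hpow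

-- `[n, 2k]_q` times the number of nondegenerate alternating forms on `𝔽_q^(2k)`.
def altFormTerm (q : R) (n k : ℕ) : R :=
  gaussBinom q n (2 * k) * q ^ (k ^ 2 - k) * ∏ i ∈ range k, (q ^ (2 * i + 1) - 1)

@[simp]
theorem altFormTerm_zero_right (n : ℕ) : altFormTerm q n 0 = 1 := by
  simp [altFormTerm]

theorem altFormTerm_eq_zero_of_lt {n k : ℕ} (h : n < 2 * k) : altFormTerm q n k = 0 := by
  rw [altFormTerm, gaussBinom_eq_zero_of_lt q h, zero_mul, zero_mul]

theorem altFormTerm_succ_succ (n k : ℕ) :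
    altFormTerm q (n + 1) (k + 1) = q ^ n * altFormTerm q n k
      + (q ^ (2 * (k + 1)) * altFormTerm q n (k + 1) - q ^ (2 * k) * altFormTerm q n k) := by
  rcases Nat.lt_or_ge n (2 * k) with h | h
  · rw [altFormTerm_eq_zero_of_lt q h, altFormTerm_eq_zero_of_lt q (by omega),
      altFormTerm_eq_zero_of_lt q (by omega)]
    ring
  have hexp : (k + 1) ^ 2 - (k + 1) = k ^ 2 - k + 2 * k := by
    have : k ≤ k ^ 2 := Nat.le_self_pow two_ne_zero k
    rw [add_sq]; omega
  have hpow : q ^ (n - 2 * k) * q ^ (k ^ 2 - k + 2 * k) = q ^ n * q ^ (k ^ 2 - k) := by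
    rw [← pow_add, ← pow_add]; congr 1
    have : k ≤ k ^ 2 := Nat.le_self_pow two_ne_zero k
    omega
  simp only [altFormTerm, hexp, prod_range_succ, show 2 * (k + 1) = 2 * k + 1 + 1 by ring,
    gaussBinom_succ_succ]
  set P := ∏ i ∈ range k, (q ^ (2 * i + 1) - 1)
  linear_combination q ^ (k ^ 2 - k + 2 * k) * P * gaussBinom_succ_mul_pow_sub_one q n (2 * k)
    + gaussBinom q n (2 * k) * P * hpow

theorem sum_altFormTerm_succ (n : ℕ) :
    ∑ k ∈ range (n + 2), altFormTerm q (n + 1) k =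
      q ^ n * ∑ k ∈ range (n + 1), altFormTerm q n k := by
  rw [sum_range_succ', sum_congr rfl fun k _ => altFormTerm_succ_succ q n k, sum_add_distrib,
    ← mul_sum, sum_range_sub (fun k => q ^ (2 * k) * altFormTerm q n k),
    altFormTerm_eq_zero_of_lt q (by omega : n < 2 * (n + 1))]
  simp

theorem sum_altFormTerm (n : ℕ) :
    ∑ k ∈ range (n / 2 + 1), altFormTerm q n k = q ^ n.choose 2 := by
  have hfull : ∀ n, ∑ k ∈ range (n + 1), altFormTerm q n k = q ^ n.choose 2 := by
    intro n
    induction n with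
    | zero => simp
    | succ n ih =>
      rw [sum_altFormTerm_succ, ih, Nat.choose_succ_succ, Nat.choose_one_right, pow_add]
  rw [← hfull n]
  refine sum_subset (range_subset_range.2 (by omega)) fun k hk hk' => ?_
  simp only [mem_range] at hk hk'
  exact altFormTerm_eq_zero_of_lt q (by omega)

end GaussBinom

section Grassmannian

variable {K V : Type*} [DivisionRing K] [AddCommGroup V] [Module K V]

def spanOfLinearIndependent (d : ℕ) (s : {s : Fin d → V // LinearIndependent K s}) :
    {W : Submodule K V // finrank K W = d} :=
  ⟨Submodule.span K (Set.range s.1), by rw [finrank_span_eq_card s.2, Fintype.card_fin]⟩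

def linearIndependentSpanEquiv {d : ℕ} (W : {W : Submodule K V // finrank K W = d})
    [FiniteDimensional K W.1] :
    {t : Fin d → W.1 // LinearIndependent K t} ≃
      {s // spanOfLinearIndependent d s = W} where
  toFun t := ⟨⟨W.1.subtype ∘ t.1, t.2.map' _ W.1.ker_subtype⟩, Subtype.ext <| by
    change Submodule.span K (Set.range (W.1.subtype ∘ t.1)) = W.1
    rw [Set.range_comp, Submodule.span_image,
      t.2.span_eq_top_of_card_eq_finrank' (by rw [Fintype.card_fin, W.2]), Submodule.map_top,
      Submodule.range_subtype]⟩
  invFun s :=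
    ⟨fun i => ⟨s.1.1 i, congrArg Subtype.val s.2 ▸ Submodule.subset_span (Set.mem_range_self i)⟩,
      .of_comp W.1.subtype s.1.2⟩
  left_inv _ := rfl
  right_inv _ := rfl

local notation "q" => Fintype.card K

theorem card_submodule_finrank_eq_mul [Fintype K] [Finite V] {d : ℕ} (hd : d ≤ finrank K V) :
    Nat.card {W : Submodule K V // finrank K W = d} * ∏ i ∈ range d, (q ^ d - q ^ i) =
      ∏ i ∈ range d, (q ^ finrank K V - q ^ i) := by
  have := Fintype.ofFinite {W : Submodule K V // finrank K W = d}
  have hfiber : ∀ W : {W : Submodule K V // finrank K W = d},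
      Nat.card {s // spanOfLinearIndependent d s = W} = ∏ i ∈ range d, (q ^ d - q ^ i) := by
    intro W
    rw [← Nat.card_congr (linearIndependentSpanEquiv W), card_linearIndependent W.2.ge, W.2,
      prod_range]
  have hli := card_linearIndependent (K := K) (V := V) hd
  rw [← prod_range (fun i => q ^ finrank K V - q ^ i)] at hli
  rw [← hli, ← Nat.card_congr (Equiv.sigmaFiberEquiv (spanOfLinearIndependent d)), Nat.card_sigma]
  simp only [hfiber, sum_const, card_univ, smul_eq_mul, Nat.card_eq_fintype_card]

theorem card_submodule_finrank_eq_gaussBinom [Fintype K] [Finite V] {d : ℕ}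
    (hd : d ≤ finrank K V) :
    (Nat.card {W : Submodule K V // finrank K W = d} : ℤ) = gaussBinom (q : ℤ) (finrank K V) d := by
  have hq : 1 < q := Fintype.one_lt_card
  have hcast : ∀ m, d ≤ m →
      ((∏ i ∈ range d, (q ^ m - q ^ i) : ℕ) : ℤ) = ∏ i ∈ range d, ((q : ℤ) ^ m - q ^ i) := by
    intro m hm
    rw [Nat.cast_prod]
    refine prod_congr rfl fun i hi => ?_
    rw [Nat.cast_sub (Nat.pow_le_pow_right hq.le (by rw [mem_range] at hi; omega))]
    push_cast
    rfl
  have hne : ∏ i ∈ range d, ((q : ℤ) ^ d - q ^ i) ≠ 0 :=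
    prod_ne_zero_iff.2 fun i hi =>
      sub_ne_zero.2 (pow_lt_pow_right₀ (by exact_mod_cast hq) (mem_range.1 hi)).ne'
  refine mul_right_cancel₀ hne ?_
  rw [gaussBinom_mul_prod_pow_sub_pow, ← hcast d le_rfl, ← hcast _ hd, ← Nat.cast_mul,
    card_submodule_finrank_eq_mul hd]

end Grassmannian

theorem q_binomial_identity_general (q n : ℕ) (F : Type) [Field F] [Fintype F]
    (hq : Fintype.card F = q) :
    q ^ (n * (n - 1) / 2) =
      ∑ k ∈ Finset.range (n / 2 + 1),
        Nat.card {W : Submodule F (Fin n → F) // Module.finrank F W = 2 * k} *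
          q ^ (k ^ 2 - k) * ∏ i ∈ Finset.range k, (q ^ (2 * i + 1) - 1) := by
  subst hq
  have hpos : 0 < Fintype.card F := Fintype.card_pos
  rw [← Nat.choose_two_right, ← Nat.cast_inj (R := ℤ), Nat.cast_pow, ← sum_altFormTerm]
  push_cast [Nat.one_le_pow _ _ hpos]
  refine sum_congr rfl fun k hk => ?_
  have h2k : 2 * k ≤ finrank F (Fin n → F) := by
    rw [finrank_fin_fun]; have := mem_range.1 hk; omega
  rw [altFormTerm, card_submodule_finrank_eq_gaussBinom h2k, finrank_fin_fun]

/-- The `q`-binomial identity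
`q^{n(n-1)/2} = Σ_{k=0}^{⌊n/2⌋} [n choose 2k]_q · q^{k²-k} · Π_{i=0}^{k-1} (q^{2i+1} - 1)`,
where `[n choose 2k]_q` is realized as the number of `2k`-dimensional subspaces of `GF(q)^n`. -/
theorem q_binomial_identity (q n : ℕ) (hn : 1 ≤ n) (F : Type) [Field F] [Fintype F]
    (hq : Fintype.card F = q) :
    q ^ (n * (n - 1) / 2) =
      ∑ k ∈ Finset.range (n / 2 + 1),
        Nat.card {W : Submodule F (Fin n → F) // Module.finrank F W = 2 * k} *
          q ^ (k ^ 2 - k) * ∏ i ∈ Finset.range k, (q ^ (2 * i + 1) - 1) :=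
  q_binomial_identity_general q n F hq
end

section
/- Let Q be a quadratic form of rank r on GF(q)^n, q odd. The number Z of solutions of Q(x) = 0 (including x = 0) is Z = q^{n-1} + (1+(-1)^r)/2 · q^{n-1}(q-1) ρ^{-r} Δ(Q), where ρ is the quadratic Gauss sum and Δ(Q) the quadratic character of the determinant of the nonsingular part of Q. -/
open Matrix
open scoped Classical

/-!
Count zeros with additive characters: `q · Z = ∑ₓ ∑ₜ ψ(t Q(x))`, where `t = 0` contributes `qⁿ`.
Diagonalize `Q = Mᵀ diag(d) M` by a congruence; for `t ≠ 0` the inner sum over `x` factors into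
one-variable sums `∑ₐ ψ(t dᵢ a²)`, equal to `q` if `dᵢ = 0` and to `χ(t dᵢ) ρ` otherwise. Summing
`χ(t)^r` over `t ≠ 0` gives `q - 1` for `r` even and `0` for `r` odd, and for `r` even
`ρ^{2r} = q^r` because `ρ² = χ(-1) q`.
-/

open Finset

theorem Matrix.IsSymm.exists_eq_transpose_mul_diagonal_mul_s14 {K ι : Type*} [Field K]
    [Invertible (2 : K)] [Fintype ι] [DecidableEq ι] {A : Matrix ι ι K} (hA : A.IsSymm) :
    ∃ M : Matrix ι ι K, ∃ d : ι → K, IsUnit M ∧ A = Mᵀ * diagonal d * M := by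
  let B := A.toBilin'
  obtain ⟨v₀, hv₀⟩ := LinearMap.BilinForm.exists_orthogonal_basis
    (LinearMap.BilinForm.isSymm_iff.mp (isSymm_toBilin'_iff_isSymm.mpr hA))
  let v := v₀.reindex (v₀.indexEquiv (Pi.basisFun K ι))
  have hv : B.IsOrthoᵢ v := fun i j hij => by
    simpa [v, B, Function.onFun] using hv₀ ((Equiv.injective _).ne hij)
  let P := (Pi.basisFun K ι).toMatrix v
  let P' := v.toMatrix (Pi.basisFun K ι)
  have hPA : Pᵀ * A * P = diagonal fun i => B (v i) (v i) := by
    rw [← LinearMap.BilinForm.toMatrix'_toBilin' A, ← LinearMap.BilinForm.toMatrix_basisFun,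
      LinearMap.BilinForm.toMatrix_mul_basis_toMatrix]
    ext i j
    rcases eq_or_ne i j with rfl | hij
    · simp [LinearMap.BilinForm.toMatrix_apply, B]
    · simpa [LinearMap.BilinForm.toMatrix_apply, hij] using hv hij
  have hPP' : P * P' = 1 := Module.Basis.toMatrix_mul_toMatrix_flip _ _
  have hP'P : P' * P = 1 := Module.Basis.toMatrix_mul_toMatrix_flip _ _
  refine ⟨P', fun i => B (v i) (v i), ⟨⟨P', P, hP'P, hPP'⟩, rfl⟩, ?_⟩
  calc A = (P * P')ᵀ * A * (P * P') := by rw [hPP']; simp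
    _ = P'ᵀ * (Pᵀ * A * P) * P' := by simp only [transpose_mul, Matrix.mul_assoc]
    _ = _ := by rw [hPA]

lemma Matrix.dotProduct_mulVec_transpose_mul_diagonal_mul {R ι : Type*} [CommSemiring R]
    [Fintype ι] [DecidableEq ι] (M : Matrix ι ι R) (d x : ι → R) :
    x ⬝ᵥ (Mᵀ * diagonal d * M) *ᵥ x = ∑ i, d i * (M *ᵥ x) i ^ 2 := by
  rw [← mulVec_mulVec, ← mulVec_mulVec, dotProduct_mulVec, vecMul_transpose, dotProduct]
  exact sum_congr rfl fun i _ => by rw [mulVec_diagonal]; ring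

lemma Matrix.rank_transpose_mul_diagonal_mul {K ι : Type*} [Field K] [DecidableEq K]
    [Fintype ι] [DecidableEq ι] {M : Matrix ι ι K} (hM : IsUnit M) (d : ι → K) :
    (Mᵀ * diagonal d * M).rank = #{i | d i ≠ 0} := by
  have hdet : IsUnit M.det := (isUnit_iff_isUnit_det M).mp hM
  rw [rank_mul_eq_left_of_isUnit_det _ _ hdet,
    rank_mul_eq_right_of_isUnit_det _ _ (by rwa [det_transpose]), rank_diagonal,
    Fintype.card_subtype]

lemma AddChar.map_sum_eq_prod {ι A M : Type*} [AddCommMonoid A] [CommMonoid M] (ψ : AddChar A M)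
    (s : Finset ι) (f : ι → A) : ψ (∑ i ∈ s, f i) = ∏ i ∈ s, ψ (f i) :=
  map_prod ψ.toMonoidHom (fun i => Multiplicative.ofAdd (f i)) s

section FiniteField

variable {F : Type*} [Field F] [Fintype F]

lemma ringChar_ne_two_of_odd_card (h : Odd (Fintype.card F)) : ringChar F ≠ 2 := fun h2 =>
  Nat.not_even_iff_odd.mpr h (Nat.even_iff.mpr (FiniteField.even_card_of_char_two h2))

lemma sum_addChar_diagonal_form {ι R : Type*} [Fintype ι] [DecidableEq ι] [CommRing R]
    (ψ : AddChar F R) (c : ι → F) :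
    ∑ y : ι → F, ψ (∑ i, c i * y i ^ 2) = ∏ i, ∑ a, ψ (c i * a ^ 2) := by
  simp_rw [Fintype.prod_sum, AddChar.map_sum_eq_prod]

variable [DecidableEq F]

lemma card_mul_card_filter_eq_zero {V R : Type*} [Fintype V] [CommRing R] [IsDomain R]
    {ψ : AddChar F R} (hψ : ψ.IsPrimitive) (f : V → F) :
    (Fintype.card F : R) * #{x | f x = 0} = ∑ x, ∑ t, ψ (t * f x) := by
  rw [sum_congr rfl fun x _ => AddChar.sum_mulShift (f x) hψ]
  simp [sum_ite, mul_comm]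

lemma sum_sq_eq_sum_quadraticChar_add_one {R : Type*} [Ring R] (hF : ringChar F ≠ 2)
    (f : F → R) : ∑ a, f (a ^ 2) = ∑ u, ((quadraticChar F u : R) + 1) * f u := by
  rw [← sum_fiberwise univ (· ^ 2)]
  refine sum_congr rfl fun u _ => ?_
  rw [sum_congr rfl fun a ha => congrArg f (mem_filter.mp ha).2, sum_const, nsmul_eq_mul]
  congr 1
  have := quadraticChar_card_sqrts hF u
  rw [Set.toFinset_ofPred] at this
  exact_mod_cast congrArg (Int.cast : ℤ → R) this

variable (F) in
noncomputable def complexQuadraticChar : MulChar F ℂ :=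
  (quadraticChar F).ringHomComp (Int.castRingHom ℂ)

@[simp]
lemma complexQuadraticChar_apply (a : F) : complexQuadraticChar F a = quadraticChar F a := by
  simp [complexQuadraticChar, MulChar.ringHomComp_apply]

lemma complexQuadraticChar_sq {a : F} (ha : a ≠ 0) : complexQuadraticChar F a ^ 2 = 1 := by
  simpa using congrArg (Int.cast : ℤ → ℂ) (quadraticChar_sq_one ha)

lemma complexQuadraticChar_ne_one (hF : ringChar F ≠ 2) : complexQuadraticChar F ≠ 1 :=
  (MulChar.ringHomComp_ne_one_iff Int.cast_injective).mpr (quadraticChar_ne_one hF)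

lemma sum_erase_zero_complexQuadraticChar_pow_of_even {r : ℕ} (hr : Even r) :
    ∑ t ∈ univ.erase (0 : F), complexQuadraticChar F t ^ r = Fintype.card F - 1 := by
  obtain ⟨k, rfl⟩ := hr
  rw [sum_congr rfl fun t ht => by
    rw [← two_mul, pow_mul, complexQuadraticChar_sq (ne_of_mem_erase ht), one_pow]]
  simp [card_erase_of_mem, Nat.cast_sub Fintype.card_pos]

lemma sum_erase_zero_complexQuadraticChar_pow_of_odd (hF : ringChar F ≠ 2) {r : ℕ}
    (hr : Odd r) :
    ∑ t ∈ univ.erase (0 : F), complexQuadraticChar F t ^ r = 0 := by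
  obtain ⟨k, rfl⟩ := hr
  rw [sum_congr rfl fun t ht => by
    rw [pow_succ, pow_mul, complexQuadraticChar_sq (ne_of_mem_erase ht), one_pow, one_mul],
    sum_erase _ (MulChar.map_zero _)]
  exact MulChar.sum_eq_zero_of_ne_one (complexQuadraticChar_ne_one hF)

section GaussSum

variable {ψ : AddChar F ℂ}

local notation "χ" => complexQuadraticChar F
local notation "g" => gaussSum (complexQuadraticChar F) ψ

lemma sum_addChar_mul_sq (hF : ringChar F ≠ 2) (hψ : ψ.IsPrimitive) {b : F} (hb : b ≠ 0) :
    ∑ a, ψ (b * a ^ 2) = χ b * g := by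
  have hshift : χ b * gaussSum χ (ψ.mulShift b) = g := by
    simpa using gaussSum_mulShift χ ψ (Units.mk0 b hb)
  calc ∑ a, ψ (b * a ^ 2) = ∑ u, (χ u + 1) * ψ (b * u) := by
        simpa using sum_sq_eq_sum_quadraticChar_add_one hF fun u => ψ (b * u)
    _ = gaussSum χ (ψ.mulShift b) + ∑ u, ψ.mulShift b u := by
        simp [add_mul, sum_add_distrib, gaussSum, AddChar.mulShift_apply]
    _ = χ b * g := by
        rw [AddChar.sum_eq_zero_of_ne_one (hψ hb), add_zero, ← hshift, ← mul_assoc, ← sq,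
          complexQuadraticChar_sq hb, one_mul]

lemma sum_addChar_sq (hF : ringChar F ≠ 2) (hψ : ψ.IsPrimitive) : ∑ a, ψ (a ^ 2) = g := by
  simpa using sum_addChar_mul_sq hF hψ one_ne_zero

lemma gaussSum_pow_mul_self_of_even (hF : ringChar F ≠ 2) (hψ : ψ.IsPrimitive) {r : ℕ}
    (hr : Even r) : g ^ r * g ^ r = Fintype.card F ^ r := by
  obtain ⟨k, rfl⟩ := hr
  rw [← pow_add, ← two_mul, pow_mul, gaussSum_sq (complexQuadraticChar_ne_one hF)
    ((quadraticChar_isQuadratic F).comp _) hψ, mul_pow, ← two_mul, pow_mul,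
    complexQuadraticChar_sq (neg_ne_zero.mpr one_ne_zero), one_pow, one_mul]

end GaussSum

end FiniteField

section TraceCharacter

variable (p : ℕ) [NeZero p] (F : Type) [Field F] [Fintype F] [Algebra (ZMod p) F]

noncomputable def traceAddChar : AddChar F ℂ :=
  ZMod.stdAddChar.compAddMonoidHom (Algebra.trace (ZMod p) F).toAddMonoidHom

lemma coe_traceAddChar : ⇑(traceAddChar p F) = psi p F := by
  funext a
  simp [traceAddChar, psi, ZMod.stdAddChar_apply, ZMod.toCircle_apply]

variable {p F} in
lemma isPrimitive_traceAddChar (hp : p = ringChar F) : (traceAddChar p F).IsPrimitive := by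
  subst hp
  refine AddChar.IsPrimitive.of_ne_one (AddChar.ne_one_iff.mpr ?_)
  obtain ⟨b, hb⟩ := FiniteField.trace_to_zmod_nondegenerate F (one_ne_zero (α := F))
  rw [one_mul] at hb
  exact ⟨b, fun h => hb (((ZMod.isPrimitive_stdAddChar _).zmod_char_eq_one_iff _ _).mp h)⟩

end TraceCharacter

section QuadraticFormCount

variable {F : Type*} [Field F] [Fintype F] [DecidableEq F] {ψ : AddChar F ℂ}
  {ι : Type*} [Fintype ι] [DecidableEq ι]

local notation "χ" => complexQuadraticChar F
local notation "g" => gaussSum (complexQuadraticChar F) ψ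
local notation "q" => (Fintype.card F : ℂ)

lemma sum_addChar_mul_diagonal_form (hF : ringChar F ≠ 2) (hψ : ψ.IsPrimitive) {t : F}
    (ht : t ≠ 0) (d : ι → F) :
    ∑ y : ι → F, ψ (t * ∑ i, d i * y i ^ 2) =
      q ^ #{i | d i = 0} * (χ t * g) ^ #{i | d i ≠ 0} * χ (∏ i with d i ≠ 0, d i) := by
  simp_rw [mul_sum, ← mul_assoc]
  rw [sum_addChar_diagonal_form, ← prod_filter_mul_prod_filter_not univ (fun i => d i = 0)]
  have hzero : ∀ i ∈ univ.filter (fun i => d i = 0), ∑ a, ψ (t * d i * a ^ 2) = q := by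
    intro i hi
    simp [(mem_filter.mp hi).2]
  have hsupp : ∀ i ∈ univ.filter (fun i => ¬ d i = 0),
      ∑ a, ψ (t * d i * a ^ 2) = χ t * g * χ (d i) := by
    intro i hi
    rw [sum_addChar_mul_sq hF hψ (mul_ne_zero ht (mem_filter.mp hi).2), map_mul]
    ring
  rw [prod_congr rfl hzero, prod_congr rfl hsupp, prod_const, prod_mul_distrib, prod_const,
    ← map_prod, mul_assoc]

lemma card_mul_card_zeros_transpose_mul_diagonal_mul (hF : ringChar F ≠ 2) (hψ : ψ.IsPrimitive)
    {M : Matrix ι ι F} (hM : IsUnit M)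
    (d : ι → F) :
    q * #{x | x ⬝ᵥ (Mᵀ * diagonal d * M) *ᵥ x = 0} =
      q ^ Fintype.card ι + (∑ t ∈ univ.erase 0, χ t ^ #{i | d i ≠ 0}) *
        (q ^ #{i | d i = 0} * g ^ #{i | d i ≠ 0} * χ (∏ i with d i ≠ 0, d i)) := by
  have hbij : Function.Bijective M.mulVec :=
    ⟨mulVec_injective_iff_isUnit.mpr hM, mulVec_surjective_iff_isUnit.mpr hM⟩
  rw [card_mul_card_filter_eq_zero hψ, sum_comm, ← add_sum_erase _ _ (mem_univ 0), sum_mul]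
  congr 1
  · simp
  · refine sum_congr rfl fun t ht => ?_
    simp_rw [dotProduct_mulVec_transpose_mul_diagonal_mul]
    rw [Fintype.sum_bijective _ hbij _ (fun y => ψ (t * ∑ i, d i * y i ^ 2)) fun _ => rfl,
      sum_addChar_mul_diagonal_form hF hψ (ne_of_mem_erase ht), mul_pow]
    ring

theorem natCard_zeros_transpose_mul_diagonal_mul [Nonempty ι] (hF : ringChar F ≠ 2)
    (hψ : ψ.IsPrimitive) {M : Matrix ι ι F} (hM : IsUnit M) (d : ι → F) :
    (Nat.card {x : ι → F // x ⬝ᵥ (Mᵀ * diagonal d * M) *ᵥ x = 0} : ℂ) =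
      q ^ (Fintype.card ι - 1) +
        (1 + (-1 : ℂ) ^ #{i | d i ≠ 0}) / 2 * q ^ (Fintype.card ι - 1) * (q - 1) *
          g ^ (-(#{i | d i ≠ 0} : ℤ)) * χ (∏ i with d i ≠ 0, d i) := by
  have hq : q ≠ 0 := Nat.cast_ne_zero.mpr Fintype.card_ne_zero
  have hqn : q * q ^ (Fintype.card ι - 1) = q ^ Fintype.card ι := by
    rw [← pow_succ', Nat.sub_add_cancel Fintype.card_pos]
  rw [Nat.card_eq_fintype_card, Fintype.card_subtype]
  apply mul_left_cancel₀ hq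
  rw [card_mul_card_zeros_transpose_mul_diagonal_mul hF hψ hM d, _root_.zpow_neg, zpow_natCast]
  set r := #{i | d i ≠ 0}
  have hsupp : #{i | d i = 0} + r = Fintype.card ι := by
    simpa using card_filter_add_card_filter_not (s := univ) (fun i => d i = 0)
  rcases Nat.even_or_odd r with hr | hr
  · have hg := gaussSum_pow_mul_self_of_even hF hψ hr
    have hgr : g ^ r ≠ 0 := fun h => pow_ne_zero r hq (by rw [← hg, h, zero_mul])
    have hkey : q ^ #{i | d i = 0} * g ^ r = q ^ Fintype.card ι * (g ^ r)⁻¹ := by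
      rw [eq_mul_inv_iff_mul_eq₀ hgr, mul_assoc, hg, ← pow_add, hsupp]
    rw [sum_erase_zero_complexQuadraticChar_pow_of_even hr, hr.neg_one_pow]
    linear_combination (q - 1) * χ (∏ i with d i ≠ 0, d i) * hkey -
      (1 + (q - 1) * χ (∏ i with d i ≠ 0, d i) * (g ^ r)⁻¹) * hqn
  · rw [sum_erase_zero_complexQuadraticChar_pow_of_odd hF hr, hr.neg_one_pow]
    linear_combination -hqn

end QuadraticFormCount

/-- For a quadratic form `Q(x) = x Q xᵀ` on `GF(q)^n` (`q` odd) of rank `r`, the number `Z`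
of solutions of `Q(x) = 0` (including `x = 0`) is
`Z = q^{n-1} + (1 + (-1)^r)/2 · q^{n-1} (q-1) ρ^{-r} Δ(Q)`, with `ρ = Σ_α ψ(α²)` the
quadratic Gauss sum. -/
theorem zero_solution_count (q n r p : ℕ) [Fact p.Prime] (hn : 1 ≤ n) (F : Type) [Field F]
    [Fintype F] [DecidableEq F] [Algebra (ZMod p) F] (hp : p = ringChar F)
    (hq : Fintype.card F = q) (hodd : Odd q)
    (Q : Matrix (Fin n) (Fin n) F) (hQ : Q.IsSymm) (hr : Q.rank = r) :
    (Nat.card {x : Fin n → F // dotProduct x (Q.mulVec x) = 0} : ℂ) =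
      (q : ℂ) ^ (n - 1) +
        ((1 + (-1 : ℂ) ^ r) / 2) * (q : ℂ) ^ (n - 1) * ((q : ℂ) - 1) *
          (∑ α : F, psi p F (α ^ 2)) ^ (-(r : ℤ)) * (Delta F Q : ℂ) := by
  subst hq hr
  have hF : ringChar F ≠ 2 := ringChar_ne_two_of_odd_card hodd
  have : Invertible (2 : F) := invertibleOfNonzero (Ring.two_ne_zero hF)
  have : Nonempty (Fin n) := ⟨⟨0, hn⟩⟩
  have hψ := isPrimitive_traceAddChar hp
  have hex := hQ.exists_eq_transpose_mul_diagonal_mul_s14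
  -- `Delta` is read off the diagonalization chosen in its definition, so we count with that one.
  have hΔ : Delta F Q = quadraticChar F
      (∏ i with hex.choose_spec.choose i ≠ 0, hex.choose_spec.choose i) := dif_pos hex
  obtain ⟨hM, hQd⟩ := hex.choose_spec.choose_spec
  generalize hex.choose_spec.choose = d at hM hQd hΔ
  generalize hex.choose = M at hM hQd hΔ
  subst hQd
  rw [hΔ, rank_transpose_mul_diagonal_mul hM, ← coe_traceAddChar, sum_addChar_sq hF hψ]
  simpa using natCard_zeros_transpose_mul_diagonal_mul hF hψ hM d
end

section
/- With GF(q)^n realized as GF(q^n) and Q_α(ζ) = tr(αζ²): the Gram determinant of B_α(ξ,η) = tr(αξη) with respect to any GF(q)-basis ζ_1,…,ζ_n equals (det D)² N(α), where D = (ζ_i^{q^{j-1}}) and N is the field norm GF(q^n) → GF(q); moreover χ((det D)²) = (-1)^{n-1}, so Δ(Q_α) = (-1)^{n-1} X(α), where X is the quadratic character of GF(q^n)^×. -/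
/-!
Over `F = 𝔽_q` we have `tr x = ∑_{k<n} x^{q^k}` and `N x = ∏_{k<n} x^{q^k}` in `E`, so the
Gram matrix of `tr(α ξ η)` factors as `D · diag(α^{q^k}) · Dᵀ` and has determinant `(det D)² N(α)`.
Frobenius permutes the columns of `D` cyclically, so `(det D)^q = (-1)^{n-1} det D`; hence
`c = (det D)² ∈ F` satisfies `c^{(q-1)/2} = (-1)^{n-1}`, which is Euler's criterion for `χ(c)`.
Euler's criterion also gives `χ(N α) = X(α)`, since `N α = α^{(q^n-1)/(q-1)}`.
-/

open Matrix

def mooreMatrix {R : Type*} [Monoid R] {n : ℕ} (q : ℕ) (v : Fin n → R) :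
    Matrix (Fin n) (Fin n) R :=
  of fun i j => v i ^ q ^ (j : ℕ)

namespace FiniteField

variable {F E : Type*} [Field F] [Fintype F] [Field E] [Fintype E] [Algebra F E]

theorem map_trace_gram_eq {n : ℕ} (hn : Module.finrank F E = n) (b : Fin n → E) (α : E) :
    (of fun i j => Algebra.trace F E (α * b i * b j)).map (algebraMap F E) =
      mooreMatrix (Fintype.card F) b * diagonal (fun k : Fin n => α ^ Fintype.card F ^ (k : ℕ)) *
        (mooreMatrix (Fintype.card F) b)ᵀ := by
  ext i j
  rw [mul_apply, map_apply, of_apply, algebraMap_trace_eq_sum_pow, hn, Finset.sum_range,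
    Nat.card_eq_fintype_card]
  simp only [mul_diagonal, transpose_apply, mooreMatrix, of_apply, mul_pow]
  exact Finset.sum_congr rfl fun k _ => by ring

theorem algebraMap_det_trace_gram {n : ℕ} (hn : Module.finrank F E = n) (b : Fin n → E)
    (α : E) :
    algebraMap F E (det (of fun i j => Algebra.trace F E (α * b i * b j))) =
      det (mooreMatrix (Fintype.card F) b) ^ 2 * algebraMap F E (Algebra.norm F α) := by
  rw [RingHom.map_det, RingHom.mapMatrix_apply, map_trace_gram_eq hn, det_mul, det_mul,
    det_transpose, det_diagonal, algebraMap_norm_eq_prod_pow, hn, Finset.prod_range,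
    Nat.card_eq_fintype_card]
  ring

theorem algebraMap_det_traceMatrix {n : ℕ} (hn : Module.finrank F E = n) (b : Fin n → E) :
    algebraMap F E (det (Algebra.traceMatrix F b)) = det (mooreMatrix (Fintype.card F) b) ^ 2 := by
  have h1 : Algebra.traceMatrix F b = of fun i j => Algebra.trace F E (1 * b i * b j) := by
    ext i j
    rw [Algebra.traceMatrix_apply, Algebra.traceForm_apply, of_apply, one_mul]
  rw [h1, algebraMap_det_trace_gram hn, map_one, map_one, mul_one]

theorem det_trace_gram_eq_mul_norm {n : ℕ} (hn : Module.finrank F E = n) (b : Fin n → E)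
    (α : E) :
    det (of fun i j => Algebra.trace F E (α * b i * b j)) =
      det (Algebra.traceMatrix F b) * Algebra.norm F α :=
  (algebraMap F E).injective <| by
    rw [algebraMap_det_trace_gram hn, map_mul, algebraMap_det_traceMatrix hn]

theorem det_mooreMatrix_pow_card {n : ℕ} (hn : Module.finrank F E = n) (v : Fin n → E) :
    det (mooreMatrix (Fintype.card F) v) ^ Fintype.card F =
      (-1) ^ (n - 1) * det (mooreMatrix (Fintype.card F) v) := by
  obtain ⟨m, rfl⟩ : ∃ m, n = m + 1 := Nat.exists_eq_add_one.mpr (hn ▸ Module.finrank_pos)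
  -- `x ^ q ^ n = x` on `E`, so raising to the `q`-th power shifts the columns cyclically.
  have hrot : (mooreMatrix (Fintype.card F) v).map (frobeniusAlgHom F E) =
      (mooreMatrix (Fintype.card F) v).submatrix id (finRotate (m + 1)) := by
    ext i j
    simp only [map_apply, submatrix_apply, id_eq, mooreMatrix, of_apply, coe_frobeniusAlgHom,
      ← pow_mul, ← pow_succ, coe_finRotate]
    split_ifs with hj
    · rw [hj, Fin.val_last, pow_zero, pow_one, ← hn, ← Module.card_eq_pow_finrank, pow_card]
    · rfl
  rw [← frobeniusAlgHom_apply, AlgHom.map_det, AlgHom.mapMatrix_apply, hrot, det_permute',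
    sign_finRotate]
  simp

section QuadraticChar

variable [DecidableEq F]

theorem quadraticChar_eq_of_pow_card_div_two_eq (hF : ringChar F ≠ 2) {a : F} {ε : ℤ}
    (hε : ε = 1 ∨ ε = -1) (h : a ^ (Fintype.card F / 2) = ε) : quadraticChar F a = ε := by
  have ha : a ≠ 0 := by
    rintro rfl
    rw [zero_pow (Nat.div_pos Fintype.one_lt_card two_pos).ne'] at h
    rcases hε with rfl | rfl <;> simp at h
  rw [quadraticChar_eq_pow_of_char_ne_two hF ha, h]
  rcases hε with rfl | rfl
  · simp
  · simp [Ring.neg_one_ne_one_of_char_ne_two hF]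

theorem quadraticChar_norm [DecidableEq E] (hF : ringChar F ≠ 2) (α : E) :
    quadraticChar F (Algebra.norm F α) = quadraticChar E α := by
  rcases eq_or_ne α 0 with rfl | hα
  · simp
  have hE : ringChar E ≠ 2 := Algebra.ringChar_eq F E ▸ hF
  obtain ⟨t, ht⟩ : Fintype.card F - 1 ∣ Fintype.card E - 1 := by
    rw [Module.card_eq_pow_finrank (K := F) (V := E)]
    exact Nat.sub_one_dvd_pow_sub_one _ _
  have hexp : (Nat.card E - 1) / (Nat.card F - 1) * (Fintype.card F / 2) = Fintype.card E / 2 := by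
    have hF1 := Nat.two_mul_odd_div_two (odd_card_of_char_ne_two hF)
    have hE1 := Nat.two_mul_odd_div_two (odd_card_of_char_ne_two hE)
    have hpos : 0 < Fintype.card F - 1 := by have := Fintype.one_lt_card (α := F); omega
    rw [Nat.card_eq_fintype_card, Nat.card_eq_fintype_card, ht, Nat.mul_div_cancel_left _ hpos]
    apply Nat.eq_of_mul_eq_mul_left two_pos
    rw [hE1, ht, ← hF1]
    ring
  apply quadraticChar_eq_of_pow_card_div_two_eq hF (quadraticChar_dichotomy hα)
  apply (algebraMap F E).injective
  rw [map_pow, algebraMap_norm_eq_pow, ← pow_mul, hexp, map_intCast,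
    quadraticChar_eq_pow_of_char_ne_two' hE]

theorem quadraticChar_det_traceMatrix (hF : ringChar F ≠ 2) {n : ℕ}
    (b : Module.Basis (Fin n) F E) :
    quadraticChar F (det (Algebra.traceMatrix F b)) = (-1) ^ (n - 1) := by
  have hn : Module.finrank F E = n := by simp [Module.finrank_eq_card_basis b]
  have hd2 := algebraMap_det_traceMatrix hn b
  set d := det (mooreMatrix (Fintype.card F) b)
  have hd : d ≠ 0 := by
    rintro h
    apply det_traceForm_ne_zero b
    rw [← Algebra.traceMatrix_of_basis]
    apply (algebraMap F E).injective
    rw [hd2, h, map_zero, zero_pow two_ne_zero]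
  have hdq : d ^ (Fintype.card F - 1) = (-1) ^ (n - 1) :=
    mul_right_cancel₀ hd <| by
      rw [← pow_succ, Nat.sub_add_cancel Fintype.card_pos, det_mooreMatrix_pow_card hn]
  apply quadraticChar_eq_of_pow_card_div_two_eq hF (neg_one_pow_eq_or ℤ _)
  apply (algebraMap F E).injective
  rw [map_pow, hd2, ← pow_mul, Nat.two_mul_odd_div_two (odd_card_of_char_ne_two hF), hdq]
  simp

end QuadraticChar

end FiniteField

open FiniteField in
theorem gram_det_and_Delta_general (q n : ℕ) (F E : Type) [Field F] [Fintype F]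
    [DecidableEq F] [Field E] [Fintype E] [DecidableEq E] [Algebra F E]
    (hq : Fintype.card F = q) (hodd : Odd q) (hdim : Module.finrank F E = n)
    (ζ : Module.Basis (Fin n) F E) :
    (∀ α : E,
      algebraMap F E (Matrix.det (Matrix.of fun i j => Algebra.trace F E (α * ζ i * ζ j))) =
        (Matrix.det (Matrix.of fun i j : Fin n => ζ i ^ q ^ (j : ℕ))) ^ 2 *
          algebraMap F E (Algebra.norm F α)) ∧
    (∃ c : F, algebraMap F E c =
        (Matrix.det (Matrix.of fun i j : Fin n => ζ i ^ q ^ (j : ℕ))) ^ 2 ∧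
      quadraticChar F c = (-1) ^ (n - 1)) ∧
    (∀ α : E, α ≠ 0 →
      quadraticChar F (Matrix.det (Matrix.of fun i j => Algebra.trace F E (α * ζ i * ζ j))) =
        (-1) ^ (n - 1) * quadraticChar E α) := by
  subst hq
  have hF : ringChar F ≠ 2 := fun h => by
    simpa [Nat.odd_iff.mp hodd] using even_card_of_char_two h
  refine ⟨algebraMap_det_trace_gram hdim ζ,
    ⟨_, algebraMap_det_traceMatrix hdim ζ, quadraticChar_det_traceMatrix hF ζ⟩,
    fun α _ => ?_⟩
  rw [det_trace_gram_eq_mul_norm hdim, map_mul, quadraticChar_det_traceMatrix hF ζ,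
    quadraticChar_norm hF]

/-- With `GF(q)^n` realized as `E = GF(q^n)` and `Q_α(ζ) = tr(α ζ²)`: for any `GF(q)`-basis
`ζ₁, …, ζₙ` of `E`, the Gram matrix of `B_α(ξ,η) = tr(α ξ η)` has determinant
`(det D)² N(α)`, where `D = (ζᵢ^{q^{j-1}})` is the Moore-type matrix and `N` the field norm;
moreover `χ((det D)²) = (-1)^{n-1}`, and hence
`Δ(Q_α) = χ(det Gram) = (-1)^{n-1} X(α)` for `α ≠ 0`, with `X` the quadratic character of
`GF(q^n)ˣ`. -/
theorem gram_det_and_Delta (q n : ℕ) (hn : 1 ≤ n) (F E : Type) [Field F] [Fintype F]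
    [DecidableEq F] [Field E] [Fintype E] [DecidableEq E] [Algebra F E]
    (hq : Fintype.card F = q) (hodd : Odd q) (hdim : Module.finrank F E = n)
    (ζ : Module.Basis (Fin n) F E) :
    (∀ α : E,
      algebraMap F E (Matrix.det (Matrix.of fun i j => Algebra.trace F E (α * ζ i * ζ j))) =
        (Matrix.det (Matrix.of fun i j : Fin n => ζ i ^ q ^ (j : ℕ))) ^ 2 *
          algebraMap F E (Algebra.norm F α)) ∧
    (∃ c : F, algebraMap F E c =
        (Matrix.det (Matrix.of fun i j : Fin n => ζ i ^ q ^ (j : ℕ))) ^ 2 ∧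
      quadraticChar F c = (-1) ^ (n - 1)) ∧
    (∀ α : E, α ≠ 0 →
      quadraticChar F (Matrix.det (Matrix.of fun i j => Algebra.trace F E (α * ζ i * ζ j))) =
        (-1) ^ (n - 1) * quadraticChar E α) :=
  gram_det_and_Delta_general q n F E hq hodd hdim ζ
end
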